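/- arXiv:1905.08503 — 7 statements merged into one kernel-verified Lean document; each statement's English description precedes it below -/
import Mathlib

section
/- Let K ⊂ ℝⁿ be a compact convex set and let φ : K → ℝ be a continuous convex function. Then for every ε > 0 there exist T > 0 and a function f_T ∈ LSE_T such that |f_T(x) − φ(x)| ≤ ε for all x ∈ K. -/
open Filter Topology Real

/-!
Every point `y` of the compact set admits a continuous affine minorant of `φ` that is `ε`-close
to `φ` at `y` (Hahn–Banach separation of `(y, φ y - ε)` from the closed convex epigraph), hence
on a neighbourhood of `y`; compactness leaves finitely many of them, `ℓ₁, …, ℓ_K`, whose maximum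
is `ε`-close to `φ`. Log-sum-exp at temperature `T` lies between this maximum and the maximum
plus `T log K`, so `T = ε / (1 + log K)` works.
-/

noncomputable def lseT {ι : Type*} [Fintype ι] (T : ℝ) (v : ι → ℝ) : ℝ :=
  T * log (∑ k, exp (v k / T))

section LSE

variable {ι : Type*} [Fintype ι] {T : ℝ} {v : ι → ℝ}

theorem le_lseT (hT : 0 < T) (k : ι) : v k ≤ lseT T v := by
  have hle : exp (v k / T) ≤ ∑ j, exp (v j / T) :=
    Finset.single_le_sum (f := fun j => exp (v j / T)) (fun j _ => (exp_pos _).le)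
      (Finset.mem_univ k)
  have hpos : 0 < ∑ j, exp (v j / T) := (exp_pos _).trans_le hle
  calc v k = T * (v k / T) := by field_simp
    _ ≤ lseT T v := mul_le_mul_of_nonneg_left ((le_log_iff_exp_le hpos).2 hle) hT.le

theorem lseT_le [Nonempty ι] (hT : 0 < T) {M : ℝ} (hM : ∀ k, v k ≤ M) :
    lseT T v ≤ M + T * log (Fintype.card ι) := by
  have hsum : ∑ k, exp (v k / T) ≤ exp (M / T + log (Fintype.card ι)) := by
    rw [exp_add, exp_log (by exact_mod_cast Fintype.card_pos), mul_comm, ← nsmul_eq_mul,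
      ← Finset.card_univ, ← Finset.sum_const]
    gcongr with k
    exact hM k
  calc lseT T v ≤ T * (M / T + log (Fintype.card ι)) :=
        mul_le_mul_of_nonneg_left
          ((log_le_iff_le_exp (Finset.sum_pos (fun k _ => exp_pos _) Finset.univ_nonempty)).2 hsum)
          hT.le
    _ = M + T * log (Fintype.card ι) := by field_simp

end LSE

theorem LinearMap.apply_eq_sum_map_single_mul {ι R : Type*} [Fintype ι] [DecidableEq ι]
    [CommSemiring R] (f : (ι → R) →ₗ[R] R) (x : ι → R) :
    f x = ∑ i, f (Pi.single i 1) * x i := by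
  conv_lhs => rw [← Finset.univ_sum_single x, map_sum]
  refine Finset.sum_congr rfl fun i _ => ?_
  rw [mul_comm, ← smul_eq_mul, ← map_smul, ← Pi.single_smul, smul_eq_mul, mul_one]

section AffineApprox

variable {E : Type*} [TopologicalSpace E] [AddCommGroup E] [Module ℝ E] [IsTopologicalAddGroup E]
  [ContinuousSMul ℝ E] [LocallyConvexSpace ℝ E] [T2Space E] {s : Set E} {φ : E → ℝ}

theorem ConvexOn.exists_fin_affine_approx (hφ : ConvexOn ℝ s φ) (hφc : ContinuousOn φ s)
    (hs : IsCompact s) (hne : s.Nonempty) {ε : ℝ} (hε : 0 < ε) :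
    ∃ K : ℕ, 0 < K ∧ ∃ (l : Fin K → E →L[ℝ] ℝ) (c : Fin K → ℝ),
      (∀ k, ∀ x ∈ s, l k x + c k ≤ φ x) ∧ ∀ x ∈ s, ∃ k, φ x - ε < l k x + c k := by
  have hminorant : ∀ y ∈ s, ∃ (l : E →L[ℝ] ℝ) (c : ℝ),
      (∀ x ∈ s, l x + c ≤ φ x) ∧ l y + c = φ y - ε / 2 := by
    intro y hy
    obtain ⟨l, c, hle, heq⟩ := hφ.exists_affine_le_of_lt (𝕜 := ℝ) (a := φ y - ε / 2) hy
      (by linarith) hs.isClosed hφc.lowerSemicontinuousOn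
    exact ⟨l, c, fun x hx => by simpa using hle ⟨x, hx⟩, by simpa using heq⟩
  choose! l c hle heq using hminorant
  have hnhds : ∀ y ∈ s, {x | φ x - ε < l y x + c y} ∈ 𝓝[s] y := by
    intro y hy
    refine ((hφc y hy).sub continuousWithinAt_const).eventually_lt
      ((l y).continuous.continuousWithinAt.add continuousWithinAt_const) ?_
    simp only [Pi.sub_apply, Pi.add_apply, heq y hy]
    linarith
  obtain ⟨t, hts, hcover⟩ := hs.elim_nhdsWithin_subcover _ hnhds
  have htne : t.Nonempty := by
    obtain ⟨x, hx⟩ := hne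
    obtain ⟨y, hy, -⟩ := Set.mem_iUnion₂.1 (hcover hx)
    exact ⟨y, hy⟩
  let e := t.equivFin
  refine ⟨t.card, t.card_pos.2 htne, fun k => l (e.symm k), fun k => c (e.symm k),
    fun k => hle _ (hts _ (e.symm k).2), fun x hx => ?_⟩
  obtain ⟨y, hy, hxy⟩ := Set.mem_iUnion₂.1 (hcover hx)
  exact ⟨e ⟨y, hy⟩, by simpa using hxy⟩

end AffineApprox

theorem lse_universal_approx_convex_general
    (n : ℕ) (𝒦 : Set (Fin n → ℝ)) (hcomp : IsCompact 𝒦)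
    (φ : (Fin n → ℝ) → ℝ) (hcont : ContinuousOn φ 𝒦) (hconv : ConvexOn ℝ 𝒦 φ)
    (ε : ℝ) (hε : 0 < ε) :
    ∃ (T : ℝ), 0 < T ∧
      ∃ (K : ℕ), 0 < K ∧
        ∃ (α : Fin K → Fin n → ℝ) (β : Fin K → ℝ),
          ∀ x ∈ 𝒦,
            |T * Real.log (∑ k, Real.exp ((∑ i, α k i * x i) / T + β k / T)) - φ x| ≤ ε := by
  rcases 𝒦.eq_empty_or_nonempty with rfl | hne
  · exact ⟨1, one_pos, 1, one_pos, 0, 0, by simp⟩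
  obtain ⟨K, hK, l, c, hle, hclose⟩ := hconv.exists_fin_affine_approx hcont hcomp hne hε
  have : Nonempty (Fin K) := Fin.pos_iff_nonempty.1 hK
  have hlogK : 0 ≤ log K := log_natCast_nonneg K
  set T := ε / (1 + log K)
  have hT : 0 < T := by positivity
  have hTlogK : T * log K ≤ ε := by
    rw [div_mul_eq_mul_div, div_le_iff₀ (by positivity)]
    nlinarith
  refine ⟨T, hT, K, hK, fun k i => l k (Pi.single i 1), c, fun x hx => ?_⟩
  have hlse : T * log (∑ k, exp ((∑ i, l k (Pi.single i 1) * x i) / T + c k / T)) =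
      lseT T (fun k => l k x + c k) := by
    have hcoord : ∀ k, ∑ i, l k (Pi.single i 1) * x i = l k x := fun k =>
      ((l k).toLinearMap.apply_eq_sum_map_single_mul x).symm
    simp only [lseT, hcoord, ← add_div]
  obtain ⟨k, hk⟩ := hclose x hx
  have hupper := lseT_le hT (fun k => hle k x hx)
  rw [Fintype.card_fin] at hupper
  rw [hlse, abs_le]
  constructor <;> linarith [le_lseT (v := fun k => l k x + c k) hT k]

/-- **Universal approximation of convex functions by LSE_T functions.**
Let `𝒦 ⊂ ℝⁿ` be a compact convex set and `φ : 𝒦 → ℝ` a continuous convex function.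
Then for every `ε > 0` there exist `T > 0` and a function
`f_T(x) = T·log (∑ₖ exp(⟨α⁽ᵏ⁾, x⟩/T + βₖ/T))` in `LSE_T` such that
`|f_T(x) − φ(x)| ≤ ε` for all `x ∈ 𝒦`. -/
theorem lse_universal_approx_convex
    (n : ℕ) (𝒦 : Set (Fin n → ℝ)) (hcomp : IsCompact 𝒦) (hconvset : Convex ℝ 𝒦)
    (φ : (Fin n → ℝ) → ℝ) (hcont : ContinuousOn φ 𝒦) (hconv : ConvexOn ℝ 𝒦 φ)
    (ε : ℝ) (hε : 0 < ε) :
    ∃ (T : ℝ), 0 < T ∧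
      ∃ (K : ℕ), 0 < K ∧
        ∃ (α : Fin K → Fin n → ℝ) (β : Fin K → ℝ),
          ∀ x ∈ 𝒦,
            |T * Real.log (∑ k, Real.exp ((∑ i, α k i * x i) / T + β k / T)) - φ x| ≤ ε :=
  lse_universal_approx_convex_general n 𝒦 hcomp φ hcont hconv ε hε
end

section
/- Let K ⊂ ℝⁿ be a compact convex set and let φ : K → ℝ be a continuous convex function. Then for every ε > 0 there exist a positive integer p and a function f_T ∈ LSE_T with T = 1/p and with rational parameters such that |f_T(x) − φ(x)| ≤ ε for all x ∈ K. -/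
/-!
On the compact set `𝒦`, the convex function `φ` is the upper envelope of its continuous affine
minorants (Hahn–Banach on the epigraph). Perturbing their coefficients to rationals costs a uniform
`ε / 2` on the bounded set `𝒦`, and by compactness finitely many of them already come within `ε / 2`
of `φ` everywhere on `𝒦`. Finally the soft maximum `T log ∑ₖ exp (gₖ / T)` of `K` numbers lies
between their maximum and the maximum plus `T log K`, which is at most `ε / 2` once `T = 1 / p`
with `p` large.
-/

open Real Finset Bornology

def ratAffine {n : ℕ} (qr : (Fin n → ℚ) × ℚ) (x : Fin n → ℝ) : ℝ :=
  ∑ i, (qr.1 i : ℝ) * x i + qr.2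

theorem continuous_ratAffine {n : ℕ} (qr : (Fin n → ℚ) × ℚ) : Continuous (ratAffine qr) := by
  unfold ratAffine
  fun_prop

theorem ContinuousLinearMap.apply_eq_sum_mul_single {ι : Type*} [Fintype ι] [DecidableEq ι]
    (l : (ι → ℝ) →L[ℝ] ℝ) (x : ι → ℝ) : l x = ∑ i, l (Pi.single i 1) * x i := by
  conv_lhs => rw [pi_eq_sum_univ' x]
  simp [mul_comm]

theorem exists_ratAffine_near {n : ℕ} {s : Set (Fin n → ℝ)} (hs : IsBounded s)
    (a : Fin n → ℝ) (b : ℝ) {η : ℝ} (hη : 0 < η) :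
    ∃ qr : (Fin n → ℚ) × ℚ, ∀ x ∈ s, |ratAffine qr x - (∑ i, a i * x i + b)| < η := by
  obtain ⟨R, hR, hsR⟩ := hs.exists_pos_norm_le
  set θ : ℝ := η / (2 * (n + 1) * R)
  have hθ : 0 < θ := by positivity
  choose q hq using fun i => exists_rat_near (K := ℝ) (a i) hθ
  obtain ⟨r, hr⟩ := exists_rat_near b (half_pos hη)
  refine ⟨(q, r), fun x hx => ?_⟩
  have hlin : |∑ i, ((q i : ℝ) - a i) * x i| ≤ n * (θ * R) :=
    calc |∑ i, ((q i : ℝ) - a i) * x i| ≤ ∑ i, |(q i : ℝ) - a i| * |x i| := by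
          simpa only [abs_mul] using abs_sum_le_sum_abs (fun i => ((q i : ℝ) - a i) * x i) univ
      _ ≤ ∑ _i : Fin n, θ * R := by
          gcongr with i
          · rw [abs_sub_comm]; exact (hq i).le
          · exact (norm_le_pi_norm x i).trans (hsR x hx)
      _ = n * (θ * R) := by simp
  have hnθR : n * (θ * R) ≤ η / 2 := by
    rw [show n * (θ * R) = η / 2 * (n / (n + 1)) by simp only [θ]; field_simp]
    exact mul_le_of_le_one_right (by positivity) ((div_le_one (by positivity)).2 (by linarith))
  calc |ratAffine (q, r) x - (∑ i, a i * x i + b)|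
      = |∑ i, ((q i : ℝ) - a i) * x i + (r - b)| := by
        unfold ratAffine; congr 1; simp only [sub_mul, sum_sub_distrib]; ring
    _ ≤ |∑ i, ((q i : ℝ) - a i) * x i| + |(r : ℝ) - b| := abs_add_le _ _
    _ < η / 2 + η / 2 := add_lt_add_of_le_of_lt (hlin.trans hnθR) (by rwa [abs_sub_comm])
    _ = η := add_halves η

theorem ConvexOn.exists_ratAffine_near_minorant {n : ℕ} {s : Set (Fin n → ℝ)}
    (hsc : IsClosed s) (hsb : IsBounded s) {f : (Fin n → ℝ) → ℝ}
    (hf : LowerSemicontinuousOn f s) (hfc : ConvexOn ℝ s f)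
    {y : Fin n → ℝ} (hy : y ∈ s) {δ : ℝ} (hδ : 0 < δ) :
    ∃ qr : (Fin n → ℚ) × ℚ, (∀ x ∈ s, ratAffine qr x ≤ f x + δ) ∧ f y - δ < ratAffine qr y := by
  obtain ⟨l, c, hle, heq⟩ := hfc.exists_affine_le_of_lt (𝕜 := ℝ) hy
    (show f y - δ / 2 < f y by linarith) hsc hf
  obtain ⟨qr, hqr⟩ := exists_ratAffine_near hsb (fun i => l (Pi.single i 1)) c
    (half_pos hδ)
  refine ⟨qr, fun x hx => ?_, ?_⟩
  · have hlx := hle ⟨x, hx⟩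
    simp only [Pi.add_apply, Set.domRestrict_apply, Function.comp_apply, RCLike.re_to_real,
      Function.const_apply] at hlx
    linarith [(abs_lt.1 (hqr x hx)).2, l.apply_eq_sum_mul_single x]
  · simp only [RCLike.re_to_real] at heq
    linarith [(abs_lt.1 (hqr y hy)).1, l.apply_eq_sum_mul_single y]

theorem IsCompact.exists_finset_forall_exists_lt {X ι : Type*} [TopologicalSpace X] {s : Set X}
    (hs : IsCompact s) {f : X → ℝ} (hf : ContinuousOn f s) (g : ι → X → ℝ)
    (hg : ∀ i, ContinuousOn (g i) s) (P : ι → Prop) (h : ∀ y ∈ s, ∃ i, P i ∧ f y < g i y) :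
    ∃ t : Finset ι, (∀ i ∈ t, P i) ∧ ∀ x ∈ s, ∃ i ∈ t, f x < g i x := by
  classical
  choose j hPj hj using h
  obtain ⟨u, hcover⟩ := hs.elim_nhdsWithin_subcover' (fun y hy => {x | f x < g (j y hy) x})
    fun y hy => (hf y hy).eventually_lt (hg _ y hy) (hj y hy)
  refine ⟨u.image fun y : s => j y y.2, fun i hi => ?_, fun x hx => ?_⟩
  · obtain ⟨y, -, rfl⟩ := mem_image.1 hi
    exact hPj y y.2
  · obtain ⟨y, hyu, hxy⟩ := Set.mem_iUnion₂.1 (hcover hx)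
    exact ⟨j y y.2, mem_image_of_mem _ hyu, hxy⟩

theorem le_mul_log_sum_exp_div {ι : Type*} [Fintype ι] (g : ι → ℝ) {T : ℝ} (hT : 0 < T)
    (k : ι) : g k ≤ T * log (∑ j, exp (g j / T)) := by
  have hle : exp (g k / T) ≤ ∑ j, exp (g j / T) :=
    single_le_sum (f := fun j => exp (g j / T)) (fun j _ => (exp_pos _).le) (mem_univ k)
  calc g k = T * log (exp (g k / T)) := by rw [log_exp]; field_simp
    _ ≤ T * log (∑ j, exp (g j / T)) := by gcongr

theorem mul_log_sum_exp_div_le {ι : Type*} [Fintype ι] [Nonempty ι] {g : ι → ℝ} {T M : ℝ}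
    (hT : 0 < T) (hM : ∀ k, g k ≤ M) :
    T * log (∑ j, exp (g j / T)) ≤ M + T * log (Fintype.card ι) := by
  have hcard : (0 : ℝ) < Fintype.card ι := by exact_mod_cast Fintype.card_pos
  have hle : ∑ j, exp (g j / T) ≤ Fintype.card ι * exp (M / T) :=
    calc ∑ j, exp (g j / T) ≤ ∑ _j : ι, exp (M / T) := by gcongr with j; exact hM j
      _ = Fintype.card ι * exp (M / T) := by simp
  calc T * log (∑ j, exp (g j / T)) ≤ T * log (Fintype.card ι * exp (M / T)) := by gcongr
    _ = M + T * log (Fintype.card ι) := by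
        rw [log_mul hcard.ne' (exp_pos _).ne', log_exp]; field_simp; ring

theorem abs_mul_log_sum_exp_div_sub_le {ι : Type*} [Fintype ι] {g : ι → ℝ} {T v δ : ℝ}
    (hT : 0 < T) (hle : ∀ k, g k ≤ v + δ) (hge : ∃ k, v - δ ≤ g k) :
    |T * log (∑ j, exp (g j / T)) - v| ≤ δ + T * log (Fintype.card ι) := by
  obtain ⟨k, hk⟩ := hge
  have : Nonempty ι := ⟨k⟩
  have hlower := le_mul_log_sum_exp_div g hT k
  have hupper := mul_log_sum_exp_div_le hT hle
  rw [abs_le]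
  have hTlog := mul_nonneg hT.le (log_natCast_nonneg (Fintype.card ι))
  constructor <;> linarith

theorem lse_rational_approx_convex_general
    (n : ℕ) (𝒦 : Set (Fin n → ℝ)) (hcomp : IsCompact 𝒦)
    (φ : (Fin n → ℝ) → ℝ) (hcont : ContinuousOn φ 𝒦) (hconv : ConvexOn ℝ 𝒦 φ)
    (ε : ℝ) (hε : 0 < ε) :
    ∃ (p : ℕ), 0 < p ∧
      ∃ (T : ℝ), T = 1 / (p : ℝ) ∧
        ∃ (K : ℕ), 0 < K ∧
          ∃ (α : Fin K → Fin n → ℝ) (β : Fin K → ℝ),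
            (∀ k i, ∃ q : ℚ, α k i = (q : ℝ)) ∧
            (∀ k, ∃ q : ℚ, β k = (q : ℝ)) ∧
            ∀ x ∈ 𝒦,
              |T * Real.log (∑ k, Real.exp ((∑ i, α k i * x i) / T + β k / T)) - φ x| ≤ ε := by
  rcases 𝒦.eq_empty_or_nonempty with rfl | ⟨x₀, hx₀⟩
  · exact ⟨1, one_pos, 1, by norm_num, 1, one_pos, 0, 0, fun _ _ => ⟨0, by simp⟩,
      fun _ => ⟨0, by simp⟩, by simp⟩
  obtain ⟨t, ht_le, ht_cover⟩ := hcomp.exists_finset_forall_exists_lt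
    (f := fun x => φ x - ε / 2) (hcont.sub continuousOn_const) ratAffine
    (fun qr => (continuous_ratAffine qr).continuousOn)
    (fun qr => ∀ x ∈ 𝒦, ratAffine qr x ≤ φ x + ε / 2)
    fun y hy => hconv.exists_ratAffine_near_minorant hcomp.isClosed hcomp.isBounded
      hcont.lowerSemicontinuousOn hy (half_pos hε)
  have hK : 0 < t.card := card_pos.2 ⟨_, (ht_cover x₀ hx₀).choose_spec.1⟩
  obtain ⟨p, hp⟩ := exists_nat_gt (2 * log t.card / ε)
  have hp0 : (0 : ℝ) < p := (by positivity : 0 ≤ 2 * log t.card / ε).trans_lt hp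
  have hTlog : 1 / (p : ℝ) * log t.card ≤ ε / 2 := by
    rw [div_lt_iff₀ hε] at hp
    rw [one_div, inv_mul_le_iff₀ hp0]
    linarith
  set qr : Fin t.card → (Fin n → ℚ) × ℚ := fun k => t.equivFin.symm k
  refine ⟨p, by exact_mod_cast hp0, _, rfl, t.card, hK, fun k i => (qr k).1 i, fun k => (qr k).2,
    fun _ _ => ⟨_, rfl⟩, fun _ => ⟨_, rfl⟩, fun x hx => ?_⟩
  simp_rw [← add_div]
  obtain ⟨i, hi, hlt⟩ := ht_cover x hx
  have hsandwich := abs_mul_log_sum_exp_div_sub_le (g := fun k => ratAffine (qr k) x)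
    (by positivity : 0 < 1 / (p : ℝ)) (fun k => ht_le _ (t.equivFin.symm k).2 x hx)
    ⟨t.equivFin ⟨i, hi⟩, by simpa [qr] using hlt.le⟩
  rw [Fintype.card_fin] at hsandwich
  exact hsandwich.trans (by linarith)

/-- **LSE approximation with rational parameters.**
Let `𝒦 ⊂ ℝⁿ` be a compact convex set and `φ : 𝒦 → ℝ` a continuous convex function.
Then for every `ε > 0` there exist a positive integer `p` and a function
`f_T(x) = T·log (∑ₖ exp(⟨α⁽ᵏ⁾, x⟩/T + βₖ/T))` in `LSE_T` with `T = 1/p` and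
rational parameters (all entries of the `α⁽ᵏ⁾` and all `βₖ` rational) such that
`|f_T(x) − φ(x)| ≤ ε` for all `x ∈ 𝒦`. -/
theorem lse_rational_approx_convex
    (n : ℕ) (𝒦 : Set (Fin n → ℝ)) (hcomp : IsCompact 𝒦) (hconvset : Convex ℝ 𝒦)
    (φ : (Fin n → ℝ) → ℝ) (hcont : ContinuousOn φ 𝒦) (hconv : ConvexOn ℝ 𝒦 φ)
    (ε : ℝ) (hε : 0 < ε) :
    ∃ (p : ℕ), 0 < p ∧
      ∃ (T : ℝ), T = 1 / (p : ℝ) ∧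
        ∃ (K : ℕ), 0 < K ∧
          ∃ (α : Fin K → Fin n → ℝ) (β : Fin K → ℝ),
            (∀ k i, ∃ q : ℚ, α k i = (q : ℝ)) ∧
            (∀ k, ∃ q : ℚ, β k = (q : ℝ)) ∧
            ∀ x ∈ 𝒦,
              |T * Real.log (∑ k, Real.exp ((∑ i, α k i * x i) / T + β k / T)) - φ x| ≤ ε :=
  lse_rational_approx_convex_general n 𝒦 hcomp φ hcont hconv ε hε
end

section
/- Let K ⊂ ℝⁿ be a compact convex set and let φ : K → ℝ be a continuous function. Then for every ε > 0 there exist a positive integer p, T = 1/p, and two functions g_T, h_T ∈ LSE_T with rational parameters such that |g_T(x) − h_T(x) − φ(x)| ≤ ε for all x ∈ K. -/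
/-!
A function in `LSE_T` with `K` terms lies between the maximum `m` of its affine pieces and
`m + T log K`, so for `T = 1/p` with `p` large a difference of two `LSE_T` functions is uniformly
close to the corresponding difference of max-affine functions. It therefore suffices that
differences of max-affine functions with rational parameters are dense in `C(𝒦, ℝ)`. They form a
lattice, since `max (a - b) (c - d) = max (a + d) (c + b) - (b + d)` and
`min (a - b) (c - d) = (a + c) - max (b + c) (a + d)`; its closure contains every real affine
function, because rational parameters are dense and an affine function depends continuously on
its parameters; and affine functions interpolate any two values at two points. The lattice
version of the Stone–Weierstrass theorem then gives density.
-/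

open Finset Real Pointwise

section LogSumExp

variable {ι : Type*} {s : Finset ι} {T : ℝ}

lemma Finset.sup'_le_mul_log_sum_exp (hs : s.Nonempty) (f : ι → ℝ) (hT : 0 < T) :
    s.sup' hs f ≤ T * log (∑ i ∈ s, exp (f i / T)) := by
  obtain ⟨j, hj, hjmax⟩ := s.exists_mem_eq_sup' hs f
  have hexp : exp (f j / T) ≤ ∑ i ∈ s, exp (f i / T) :=
    single_le_sum (f := fun i => exp (f i / T)) (fun i _ => (exp_pos _).le) hj
  rw [hjmax, ← div_le_iff₀' hT]
  exact (le_log_iff_exp_le (hexp.trans_lt' (exp_pos _))).2 hexp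

lemma Finset.mul_log_sum_exp_le (hs : s.Nonempty) (f : ι → ℝ) (hT : 0 < T) :
    T * log (∑ i ∈ s, exp (f i / T)) ≤ s.sup' hs f + T * log #s := by
  have hsum : ∑ i ∈ s, exp (f i / T) ≤ #s * exp (s.sup' hs f / T) := by
    rw [← nsmul_eq_mul]
    refine sum_le_card_nsmul _ _ _ fun i hi => exp_le_exp.2 ?_
    exact div_le_div_of_nonneg_right (le_sup' f hi) hT.le
  have hcard : (0 : ℝ) < #s := by exact_mod_cast hs.card_pos
  have hlog : log (∑ i ∈ s, exp (f i / T)) ≤ log #s + s.sup' hs f / T := by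
    grw [hsum, log_mul hcard.ne' (exp_pos _).ne', log_exp]
  calc T * log (∑ i ∈ s, exp (f i / T)) ≤ T * (log #s + s.sup' hs f / T) := by gcongr
    _ = s.sup' hs f + T * log #s := by field_simp; ring

end LogSumExp

lemma exists_pos_nat_one_div_mul_le (C : ℝ) {ε : ℝ} (hε : 0 < ε) :
    ∃ p : ℕ, 0 < p ∧ 1 / (p : ℝ) * C ≤ ε := by
  obtain ⟨p, hp⟩ := exists_nat_gt (max (C / ε) 0)
  have hp₀ : (0 : ℝ) < p := (le_max_right _ _).trans_lt hp
  refine ⟨p, Nat.cast_pos.mp hp₀, ?_⟩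
  rw [one_div_mul_eq_div, div_le_iff₀ hp₀, ← div_le_iff₀' hε]
  exact (le_max_left _ _).trans hp.le

lemma Finset.sup'_add_eq_of_map_add {G M : Type*} [Add G] [DecidableEq G] [AddCommGroup M]
    [LinearOrder M] [IsOrderedAddMonoid M] {s t : Finset G} (hs : s.Nonempty) (ht : t.Nonempty)
    (f : G → M) (hf : ∀ a b, f (a + b) = f a + f b) :
    (s + t).sup' (hs.add ht) f = s.sup' hs f + t.sup' ht f := by
  simp only [add_def, sup'_image, sup'_product_left, Function.comp_def, hf, ← add_sup']
  exact (sup'_add _ _ _ _).symm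

section ContinuousMapLattice

variable {X : Type*} [TopologicalSpace X] [WeaklyLocallyCompactSpace X] {L : Set C(X, ℝ)}
  {f g : C(X, ℝ)}

lemma ContinuousMap.sup_mem_closure (hL : ∀ f ∈ L, ∀ g ∈ L, f ⊔ g ∈ L) (hf : f ∈ closure L)
    (hg : g ∈ closure L) : f ⊔ g ∈ closure L := by
  have hsup : Continuous fun p : C(X, ℝ) × C(X, ℝ) => p.1 ⊔ p.2 :=
    continuous_of_continuous_uncurry _ (by simp only [sup_apply]; fun_prop)
  exact map_mem_closure₂ hsup hf hg hL

lemma ContinuousMap.inf_mem_closure (hL : ∀ f ∈ L, ∀ g ∈ L, f ⊓ g ∈ L) (hf : f ∈ closure L)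
    (hg : g ∈ closure L) : f ⊓ g ∈ closure L := by
  have hinf : Continuous fun p : C(X, ℝ) × C(X, ℝ) => p.1 ⊓ p.2 :=
    continuous_of_continuous_uncurry _ (by simp only [inf_apply]; fun_prop)
  exact map_mem_closure₂ hinf hf hg hL

end ContinuousMapLattice

namespace DLSE

variable {n : ℕ}

def affine (c : (Fin n → ℝ) × ℝ) (x : Fin n → ℝ) : ℝ := ∑ i, c.1 i * x i + c.2

lemma continuous_affine :
    Continuous fun q : ((Fin n → ℝ) × ℝ) × (Fin n → ℝ) => affine q.1 q.2 := by
  unfold affine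
  fun_prop

lemma affine_add (c d : (Fin n → ℝ) × ℝ) (x : Fin n → ℝ) :
    affine (c + d) x = affine c x + affine d x := by
  simp only [affine, Prod.fst_add, Prod.snd_add, Pi.add_apply, add_mul, sum_add_distrib]
  ring

lemma affine_single (i : Fin n) (m b : ℝ) (x : Fin n → ℝ) :
    affine (Pi.single i m, b) x = m * x i + b := by
  simp [affine, Pi.single_apply]

lemma exists_affine_eq {x y : Fin n → ℝ} {u w : ℝ} (h : x = y → u = w) :
    ∃ c, affine c x = u ∧ affine c y = w := by
  by_cases hxy : x = y
  · subst hxy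
    exact ⟨(0, u), by simp [affine], by simp [affine, h rfl]⟩
  obtain ⟨i, hi⟩ := Function.ne_iff.mp hxy
  have hi' : y i - x i ≠ 0 := sub_ne_zero.2 (Ne.symm hi)
  set m := (w - u) / (y i - x i)
  refine ⟨(Pi.single i m, u - m * x i), by rw [affine_single]; ring, ?_⟩
  rw [affine_single]
  linear_combination div_mul_cancel₀ (w - u) hi'

def ratParam : (Fin n → ℚ) × ℚ → (Fin n → ℝ) × ℝ :=
  Prod.map (Pi.map fun _ => Rat.cast) Rat.cast

lemma ratParam_add (p q : (Fin n → ℚ) × ℚ) : ratParam (p + q) = ratParam p + ratParam q := by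
  ext <;> simp [ratParam]

lemma denseRange_ratParam : DenseRange (ratParam (n := n)) :=
  (DenseRange.piMap fun _ => Rat.denseRange_cast).prodMap Rat.denseRange_cast

def IsRatMaxAffine (f : (Fin n → ℝ) → ℝ) : Prop :=
  ∃ (S : Finset ((Fin n → ℚ) × ℚ)) (hS : S.Nonempty),
    ∀ x, f x = S.sup' hS fun p => affine (ratParam p) x

lemma isRatMaxAffine_affine (p : (Fin n → ℚ) × ℚ) : IsRatMaxAffine (affine (ratParam p)) :=
  ⟨{p}, singleton_nonempty p, fun x => by rw [sup'_singleton]⟩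

namespace IsRatMaxAffine

variable {f g : (Fin n → ℝ) → ℝ}

lemma max (hf : IsRatMaxAffine f) (hg : IsRatMaxAffine g) :
    IsRatMaxAffine fun x => max (f x) (g x) := by
  obtain ⟨S, hS, hf⟩ := hf
  obtain ⟨S', hS', hg⟩ := hg
  refine ⟨S ∪ S', hS.mono subset_union_left, fun x => ?_⟩
  dsimp only
  rw [sup'_union hS hS', hf x, hg x]

lemma add (hf : IsRatMaxAffine f) (hg : IsRatMaxAffine g) :
    IsRatMaxAffine fun x => f x + g x := by
  obtain ⟨S, hS, hf⟩ := hf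
  obtain ⟨S', hS', hg⟩ := hg
  refine ⟨S + S', hS.add hS', fun x => ?_⟩
  dsimp only
  rw [hf x, hg x, sup'_add_eq_of_map_add]
  intro p q
  rw [ratParam_add, affine_add]

lemma exists_logSumExp_bounds (hf : IsRatMaxAffine f) :
    ∃ K, 0 < K ∧ ∃ (α : Fin K → Fin n → ℝ) (β : Fin K → ℝ),
      (∀ k i, ∃ q : ℚ, α k i = q) ∧ (∀ k, ∃ q : ℚ, β k = q) ∧
      ∀ T, 0 < T → ∀ x,
        f x ≤ T * log (∑ k, exp ((∑ i, α k i * x i) / T + β k / T)) ∧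
        T * log (∑ k, exp ((∑ i, α k i * x i) / T + β k / T)) ≤ f x + T * log K := by
  obtain ⟨S, hS, hf⟩ := hf
  let e : Fin #S → (Fin n → ℚ) × ℚ := fun k => S.equivFin.symm k
  refine ⟨#S, hS.card_pos, fun k => (ratParam (e k)).1, fun k => (ratParam (e k)).2,
    fun k i => ⟨_, rfl⟩, fun k => ⟨_, rfl⟩, fun T hT x => ?_⟩
  have hsum : ∑ k, exp ((∑ i, (ratParam (e k)).1 i * x i) / T + (ratParam (e k)).2 / T) =
      ∑ p ∈ S, exp (affine (ratParam p) x / T) := by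
    simp_rw [← add_div]
    exact (Equiv.sum_comp S.equivFin.symm fun p : S => exp (affine (ratParam p) x / T)).trans
      (sum_coe_sort S fun p => exp (affine (ratParam p) x / T))
  rw [hsum, hf x]
  exact ⟨sup'_le_mul_log_sum_exp hS _ hT, mul_log_sum_exp_le hS _ hT⟩

end IsRatMaxAffine

section Density

variable (𝒦 : Set (Fin n → ℝ))

def ratMaxAffineDiff : Set C(𝒦, ℝ) :=
  {f | ∃ g h : (Fin n → ℝ) → ℝ, IsRatMaxAffine g ∧ IsRatMaxAffine h ∧ ∀ x : 𝒦, f x = g x - h x}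

variable {𝒦}

lemma sup_mem_ratMaxAffineDiff {f f' : C(𝒦, ℝ)} (hf : f ∈ ratMaxAffineDiff 𝒦)
    (hf' : f' ∈ ratMaxAffineDiff 𝒦) : f ⊔ f' ∈ ratMaxAffineDiff 𝒦 := by
  obtain ⟨g, h, hg, hh, hf⟩ := hf
  obtain ⟨g', h', hg', hh', hf'⟩ := hf'
  refine ⟨_, _, (hg.add hh').max (hg'.add hh), hh.add hh', fun x => ?_⟩
  rw [ContinuousMap.sup_apply, hf x, hf' x, ← max_sub_sub_right]
  congr 1 <;> ring

lemma inf_mem_ratMaxAffineDiff {f f' : C(𝒦, ℝ)} (hf : f ∈ ratMaxAffineDiff 𝒦)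
    (hf' : f' ∈ ratMaxAffineDiff 𝒦) : f ⊓ f' ∈ ratMaxAffineDiff 𝒦 := by
  obtain ⟨g, h, hg, hh, hf⟩ := hf
  obtain ⟨g', h', hg', hh', hf'⟩ := hf'
  refine ⟨_, _, hg.add hg', (hh.add hg').max (hg.add hh'), fun x => ?_⟩
  rw [ContinuousMap.inf_apply, hf x, hf' x, ← min_sub_sub_left]
  congr 1 <;> ring

variable (𝒦)

def affineOn (c : (Fin n → ℝ) × ℝ) : C(𝒦, ℝ) :=
  ⟨fun x => affine c x, continuous_affine.comp (continuous_const.prodMk continuous_subtype_val)⟩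

lemma continuous_affineOn : Continuous (affineOn 𝒦) :=
  ContinuousMap.continuous_of_continuous_uncurry _ <|
    continuous_affine.comp (continuous_fst.prodMk (continuous_subtype_val.comp continuous_snd))

lemma affineOn_mem_closure (c : (Fin n → ℝ) × ℝ) :
    affineOn 𝒦 c ∈ closure (ratMaxAffineDiff 𝒦) := by
  refine map_mem_closure (continuous_affineOn 𝒦) (denseRange_ratParam c) ?_
  rintro _ ⟨p, rfl⟩
  exact ⟨_, _, isRatMaxAffine_affine p, isRatMaxAffine_affine 0,
    fun x => by simp [affineOn, affine, ratParam]⟩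

lemma closure_ratMaxAffineDiff [CompactSpace 𝒦] : closure (ratMaxAffineDiff 𝒦) = ⊤ := by
  have hsep : (closure (ratMaxAffineDiff 𝒦)).SeparatesPointsStrongly := fun v x y => by
    obtain ⟨c, hcx, hcy⟩ :=
      exists_affine_eq (x := (x : Fin n → ℝ)) (y := y) fun hxy => congrArg v (Subtype.ext hxy)
    exact ⟨affineOn 𝒦 c, affineOn_mem_closure 𝒦 c, hcx, hcy⟩
  rw [← closure_closure]
  exact ContinuousMap.sublattice_closure_eq_top _ ⟨_, affineOn_mem_closure 𝒦 0⟩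
    (fun f hf g hg => ContinuousMap.inf_mem_closure (fun f hf g hg =>
      inf_mem_ratMaxAffineDiff hf hg) hf hg)
    (fun f hf g hg => ContinuousMap.sup_mem_closure (fun f hf g hg =>
      sup_mem_ratMaxAffineDiff hf hg) hf hg) hsep

variable {𝒦}

lemma exists_isRatMaxAffine_sub_near (hcomp : IsCompact 𝒦) {φ : (Fin n → ℝ) → ℝ}
    (hcont : ContinuousOn φ 𝒦) {ε : ℝ} (hε : 0 < ε) :
    ∃ g h, IsRatMaxAffine g ∧ IsRatMaxAffine h ∧ ∀ x ∈ 𝒦, |g x - h x - φ x| < ε := by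
  have := isCompact_iff_compactSpace.mp hcomp
  have hφ : (⟨_, hcont.domRestrict⟩ : C(𝒦, ℝ)) ∈ closure (ratMaxAffineDiff 𝒦) := by
    rw [closure_ratMaxAffineDiff]; trivial
  obtain ⟨f, ⟨g, h, hg, hh, hf⟩, hfφ⟩ := Metric.mem_closure_iff.mp hφ ε hε
  refine ⟨g, h, hg, hh, fun x hx => ?_⟩
  have := (ContinuousMap.dist_apply_le_dist ⟨x, hx⟩).trans_lt hfφ
  rwa [Real.dist_eq, hf, abs_sub_comm] at this

end Density

end DLSE

open DLSE in
theorem dlse_universal_approx_general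
    (n : ℕ) (𝒦 : Set (Fin n → ℝ)) (hcomp : IsCompact 𝒦)
    (φ : (Fin n → ℝ) → ℝ) (hcont : ContinuousOn φ 𝒦)
    (ε : ℝ) (hε : 0 < ε) :
    ∃ (p : ℕ), 0 < p ∧
      ∃ (T : ℝ), T = 1 / (p : ℝ) ∧
        ∃ (K₁ K₂ : ℕ), 0 < K₁ ∧ 0 < K₂ ∧
          ∃ (α : Fin K₁ → Fin n → ℝ) (β : Fin K₁ → ℝ)
            (γ : Fin K₂ → Fin n → ℝ) (δ : Fin K₂ → ℝ),
            (∀ k i, ∃ q : ℚ, α k i = (q : ℝ)) ∧ (∀ k, ∃ q : ℚ, β k = (q : ℝ)) ∧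
            (∀ k i, ∃ q : ℚ, γ k i = (q : ℝ)) ∧ (∀ k, ∃ q : ℚ, δ k = (q : ℝ)) ∧
            ∀ x ∈ 𝒦,
              |T * Real.log (∑ k, Real.exp ((∑ i, α k i * x i) / T + β k / T))
                - T * Real.log (∑ k, Real.exp ((∑ i, γ k i * x i) / T + δ k / T))
                - φ x| ≤ ε := by
  obtain ⟨g, h, hg, hh, hgh⟩ := exists_isRatMaxAffine_sub_near hcomp hcont (half_pos hε)
  obtain ⟨K₁, hK₁, α, β, hα, hβ, hαβ⟩ := hg.exists_logSumExp_bounds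
  obtain ⟨K₂, hK₂, γ, δ, hγ, hδ, hγδ⟩ := hh.exists_logSumExp_bounds
  obtain ⟨p, hp, hpε⟩ := exists_pos_nat_one_div_mul_le (log K₁ + log K₂) (half_pos hε)
  have hT : 0 < 1 / (p : ℝ) := by positivity
  refine ⟨p, hp, _, rfl, K₁, K₂, hK₁, hK₂, α, β, γ, δ, hα, hβ, hγ, hδ, fun x hx => ?_⟩
  obtain ⟨hg₁, hg₂⟩ := hαβ _ hT x
  obtain ⟨hh₁, hh₂⟩ := hγδ _ hT x
  obtain ⟨hgh₁, hgh₂⟩ := abs_lt.mp (hgh x hx)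
  have hK₁T := mul_nonneg hT.le (log_natCast_nonneg K₁)
  have hK₂T := mul_nonneg hT.le (log_natCast_nonneg K₂)
  rw [mul_add] at hpε
  rw [abs_le]
  constructor <;> linarith

/-- **Universal approximation property of DLSE_T.**
Let `𝒦 ⊂ ℝⁿ` be a compact convex set and `φ : 𝒦 → ℝ` a continuous function.
Then for every `ε > 0` there exist a positive integer `p`, `T = 1/p`, and two functions
`g_T, h_T ∈ LSE_T` with rational parameters such that
`|g_T(x) − h_T(x) − φ(x)| ≤ ε` for all `x ∈ 𝒦`. -/
theorem dlse_universal_approx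
    (n : ℕ) (𝒦 : Set (Fin n → ℝ)) (hcomp : IsCompact 𝒦) (hconvset : Convex ℝ 𝒦)
    (φ : (Fin n → ℝ) → ℝ) (hcont : ContinuousOn φ 𝒦)
    (ε : ℝ) (hε : 0 < ε) :
    ∃ (p : ℕ), 0 < p ∧
      ∃ (T : ℝ), T = 1 / (p : ℝ) ∧
        ∃ (K₁ K₂ : ℕ), 0 < K₁ ∧ 0 < K₂ ∧
          ∃ (α : Fin K₁ → Fin n → ℝ) (β : Fin K₁ → ℝ)
            (γ : Fin K₂ → Fin n → ℝ) (δ : Fin K₂ → ℝ),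
            (∀ k i, ∃ q : ℚ, α k i = (q : ℝ)) ∧ (∀ k, ∃ q : ℚ, β k = (q : ℝ)) ∧
            (∀ k i, ∃ q : ℚ, γ k i = (q : ℝ)) ∧ (∀ k, ∃ q : ℚ, δ k = (q : ℝ)) ∧
            ∀ x ∈ 𝒦,
              |T * Real.log (∑ k, Real.exp ((∑ i, α k i * x i) / T + β k / T))
                - T * Real.log (∑ k, Real.exp ((∑ i, γ k i * x i) / T + δ k / T))
                - φ x| ≤ ε :=
  dlse_universal_approx_general n 𝒦 hcomp φ hcont ε hε
end

section
/- Let T > 0 and define f_T : ℝ → ℝ by f_T(x) = T·(log(1 + exp(x/T)) − log(1 + exp((x−1)/T))), and let φ(x) = max(0, min(x, 1)). Then for all x ∈ ℝ, f_T(x) − T·log 2 ≤ φ(x) ≤ f_T(x) + T·log 2. -/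
/-!
Write `s(y) = log (1 + exp y)` (softplus). Since `max 1 (exp y) ≤ 1 + exp y ≤ 2 max 1 (exp y)`,
`s` is within `log 2` of the ramp `y ↦ max 0 y`, so `T s(x / T)` is within `T log 2` of `max 0 x`.
The clamp is a difference of two ramps, `φ x = max 0 x - max 0 (x - 1)`, and the one-sided errors
of the two softplus terms combine to at most `T log 2` in each direction.
-/

open Real

noncomputable def softplus (y : ℝ) : ℝ := log (1 + exp y)

lemma max_zero_le_softplus (y : ℝ) : max 0 y ≤ softplus y := by
  refine max_le (log_nonneg ?_) ?_
  · linarith [exp_pos y]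
  · calc y = log (exp y) := (log_exp y).symm
      _ ≤ softplus y := log_le_log (exp_pos y) (by linarith [exp_pos y])

lemma softplus_le_max_zero_add_log_two (y : ℝ) : softplus y ≤ max 0 y + log 2 := by
  have hbound : 1 + exp y ≤ 2 * exp (max 0 y) := by
    have h1 : 1 ≤ exp (max 0 y) := one_le_exp (le_max_left 0 y)
    have h2 : exp y ≤ exp (max 0 y) := exp_le_exp.2 (le_max_right 0 y)
    linarith
  calc softplus y ≤ log (2 * exp (max 0 y)) := log_le_log (by positivity) hbound
    _ = max 0 y + log 2 := by rw [log_mul two_ne_zero (exp_ne_zero _), log_exp, add_comm]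

lemma mul_softplus_div_bounds {T : ℝ} (hT : 0 < T) (x : ℝ) :
    max 0 x ≤ T * softplus (x / T) ∧ T * softplus (x / T) ≤ max 0 x + T * log 2 := by
  have hramp : T * max 0 (x / T) = max 0 x := by
    rw [mul_max_of_nonneg _ _ hT.le, mul_div_cancel₀ _ hT.ne', mul_zero]
  constructor
  · calc max 0 x = T * max 0 (x / T) := hramp.symm
      _ ≤ T * softplus (x / T) := mul_le_mul_of_nonneg_left (max_zero_le_softplus _) hT.le
  · calc T * softplus (x / T) ≤ T * (max 0 (x / T) + log 2) :=
          mul_le_mul_of_nonneg_left (softplus_le_max_zero_add_log_two _) hT.le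
      _ = max 0 x + T * log 2 := by rw [mul_add, hramp]

lemma max_zero_min_one_eq_sub (x : ℝ) : max 0 (min x 1) = max 0 x - max 0 (x - 1) := by
  rcases le_total x 0 with hx | hx
  · simp [hx, hx.trans zero_le_one, (by linarith : x - 1 ≤ 0)]
  rcases le_total x 1 with hx1 | hx1
  · simp [hx, hx1, (by linarith : x - 1 ≤ 0)]
  · simp [hx1, hx, (by linarith : 0 ≤ x - 1)]

/-- **Explicit DLSE_T approximation of the clamp function.**
Let `T > 0` and `f_T(x) = T·(log(1 + exp(x/T)) − log(1 + exp((x−1)/T)))`, and let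
`φ(x) = max(0, min(x, 1))`.  Then `f_T(x) − T·log 2 ≤ φ(x) ≤ f_T(x) + T·log 2`
for all `x ∈ ℝ`. -/
theorem dlse_clamp_approx (T : ℝ) (hT : 0 < T) (x : ℝ) :
    T * (Real.log (1 + Real.exp (x / T)) - Real.log (1 + Real.exp ((x - 1) / T)))
        - T * Real.log 2
      ≤ max 0 (min x 1) ∧
    max 0 (min x 1)
      ≤ T * (Real.log (1 + Real.exp (x / T)) - Real.log (1 + Real.exp ((x - 1) / T)))
        + T * Real.log 2 := by
  obtain ⟨hx_lo, hx_hi⟩ := mul_softplus_div_bounds hT x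
  obtain ⟨hx1_lo, hx1_hi⟩ := mul_softplus_div_bounds hT (x - 1)
  rw [max_zero_min_one_eq_sub]
  simp only [softplus] at hx_lo hx_hi hx1_lo hx1_hi
  constructor <;> linarith
end

section
/- Let R ⊂ ℝ_{>0}ⁿ be a compact log-convex set and let ℓ : R → ℝ_{>0} be a continuous positive function. Then for every ε > 0 there exist a positive integer p, T = 1/p, and two functions ψ_T, ψ′_T ∈ GPOS_T with rational parameters such that |(ℓ(x) − ψ_T(x)/ψ′_T(x)) / min(ℓ(x), ψ_T(x)/ψ′_T(x))| ≤ ε for all x ∈ R. -/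
/-!
In logarithmic coordinates `y = log x` the set `R` becomes a compact set `C` and `log ℓ` a
continuous function on `C`. Differences of maxima of finitely many affine functions with rational
coefficients form a lattice whose closure contains every affine function, so by the lattice
Stone–Weierstrass theorem they are uniformly dense in `C(C, ℝ)`. A maximum of `K` affine functions
`Aₖ` is within `log K / p` of its smoothing `p⁻¹ log ∑ₖ exp (p Aₖ)`, which in the original
coordinates is a `GPOS_{1/p}` function with rational parameters. Finally, the relative error
`|(a - b) / min a b|` equals `exp |log a - log b| - 1`.
-/

open Finset Real
open scoped Pointwise

section MaxAffine

variable {ι : Type*} [Fintype ι]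

def ratMaxAffine (S : Finset ((ι → ℚ) × ℚ)) (hS : S.Nonempty) (y : ι → ℝ) : ℝ :=
  S.sup' hS fun q => ∑ i, (q.1 i : ℝ) * y i + q.2

lemma ratMaxAffine_singleton (q : (ι → ℚ) × ℚ) (y : ι → ℝ) :
    ratMaxAffine {q} (singleton_nonempty q) y = ∑ i, (q.1 i : ℝ) * y i + q.2 :=
  sup'_singleton _

lemma max_ratMaxAffine {S T : Finset ((ι → ℚ) × ℚ)} (hS : S.Nonempty) (hT : T.Nonempty)
    (y : ι → ℝ) :
    max (ratMaxAffine S hS y) (ratMaxAffine T hT y) =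
      ratMaxAffine (S ∪ T) (hS.mono subset_union_left) y :=
  (sup'_union hS hT _).symm

lemma ratMaxAffine_add_ratMaxAffine {S T : Finset ((ι → ℚ) × ℚ)} (hS : S.Nonempty)
    (hT : T.Nonempty) (y : ι → ℝ) :
    ratMaxAffine S hS y + ratMaxAffine T hT y = ratMaxAffine (S + T) (hS.add hT) y := by
  simp only [ratMaxAffine, add_def, sup'_image]
  rw [sup'_product_left, sup'_add]
  refine sup'_congr hS rfl fun q _ => ?_
  rw [add_sup']
  refine sup'_congr hT rfl fun q' _ => ?_
  simp only [Function.comp_apply, Prod.fst_add, Prod.snd_add, Pi.add_apply, Rat.cast_add, add_mul,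
    sum_add_distrib]
  ring

end MaxAffine

lemma ContinuousMap.lipschitzWith_sup {X : Type*} [TopologicalSpace X] [CompactSpace X] :
    LipschitzWith 1 fun p : C(X, ℝ) × C(X, ℝ) => p.1 ⊔ p.2 :=
  LipschitzWith.of_dist_le_mul fun p q => by
    rw [NNReal.coe_one, one_mul, ContinuousMap.dist_le dist_nonneg]
    intro x
    simp only [ContinuousMap.sup_apply, Real.dist_eq, Prod.dist_eq]
    exact (abs_max_sub_max_le_max _ _ _ _).trans
      (max_le_max (ContinuousMap.dist_apply_le_dist (f := p.1) (g := q.1) x)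
        (ContinuousMap.dist_apply_le_dist (f := p.2) (g := q.2) x))

section Density

variable {ι : Type*} [Fintype ι] (C : Set (ι → ℝ))

def ratMaxAffineDiff : Set C(C, ℝ) :=
  {f | ∃ (S T : Finset ((ι → ℚ) × ℚ)) (hS : S.Nonempty) (hT : T.Nonempty),
    ∀ z : C, f z = ratMaxAffine S hS z.1 - ratMaxAffine T hT z.1}

def affineOn : C((ι → ℝ) × ℝ, C(C, ℝ)) :=
  ContinuousMap.curry ⟨fun p : ((ι → ℝ) × ℝ) × C => ∑ i, p.1.1 i * p.2.1 i + p.1.2,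
    (show Continuous fun p : ((ι → ℝ) × ℝ) × (ι → ℝ) => ∑ i, p.1.1 i * p.2 i + p.1.2 by
      fun_prop).comp (continuous_id.prodMap continuous_subtype_val)⟩

variable {C}

lemma affineOn_apply (q : (ι → ℝ) × ℝ) (z : C) : affineOn C q z = ∑ i, q.1 i * z.1 i + q.2 := rfl

lemma sup_mem_ratMaxAffineDiff {f g : C(C, ℝ)} (hf : f ∈ ratMaxAffineDiff C)
    (hg : g ∈ ratMaxAffineDiff C) : f ⊔ g ∈ ratMaxAffineDiff C := by
  obtain ⟨S, T, hS, hT, hf⟩ := hf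
  obtain ⟨S', T', hS', hT', hg⟩ := hg
  refine ⟨(S + T') ∪ (S' + T), T + T', (hS.add hT').mono subset_union_left, hT.add hT',
    fun z => ?_⟩
  rw [ContinuousMap.sup_apply, hf, hg, ← max_ratMaxAffine (hS.add hT') (hS'.add hT),
    ← ratMaxAffine_add_ratMaxAffine hS hT', ← ratMaxAffine_add_ratMaxAffine hS' hT,
    ← ratMaxAffine_add_ratMaxAffine hT hT', ← max_sub_sub_right]
  congr 1 <;> ring

lemma neg_mem_ratMaxAffineDiff {f : C(C, ℝ)} (hf : f ∈ ratMaxAffineDiff C) :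
    -f ∈ ratMaxAffineDiff C := by
  obtain ⟨S, T, hS, hT, hf⟩ := hf
  exact ⟨T, S, hT, hS, fun z => by simp [hf]⟩

lemma affineOn_mem_closure_ratMaxAffineDiff (q : (ι → ℝ) × ℝ) :
    affineOn C q ∈ closure (ratMaxAffineDiff C) := by
  have hdense : DenseRange (Prod.map (Pi.map fun (_ : ι) => ((↑) : ℚ → ℝ)) ((↑) : ℚ → ℝ)) :=
    (DenseRange.piMap fun _ => Rat.denseRange_cast).prodMap Rat.denseRange_cast
  refine map_mem_closure (affineOn C).continuous (hdense q) ?_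
  rintro _ ⟨q, rfl⟩
  refine ⟨{q}, {0}, singleton_nonempty q, singleton_nonempty 0, fun z => ?_⟩
  simp [ratMaxAffine_singleton, affineOn_apply]

lemma separatesPointsStrongly_affineOn_range :
    (Set.range (affineOn C)).SeparatesPointsStrongly := by
  classical
  intro v x y
  by_cases hxy : x = y
  · subst hxy
    exact ⟨_, ⟨(0, v x), rfl⟩, by simp [affineOn_apply], by simp [affineOn_apply]⟩
  obtain ⟨i, hi⟩ := Function.ne_iff.mp (Subtype.coe_injective.ne hxy)
  have hne : y.1 i - x.1 i ≠ 0 := sub_ne_zero.2 (Ne.symm hi)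
  set t := (v y - v x) / (y.1 i - x.1 i)
  refine ⟨_, ⟨(Pi.single i t, v x - t * x.1 i), rfl⟩, ?_, ?_⟩ <;>
    simp only [affineOn_apply, Pi.single_apply, ite_mul, zero_mul, sum_ite_eq', mem_univ, if_true]
  · ring
  · linear_combination (div_mul_cancel₀ (v y - v x) hne : t * (y.1 i - x.1 i) = v y - v x)

lemma closure_ratMaxAffineDiff_eq_top [CompactSpace C] : closure (ratMaxAffineDiff C) = ⊤ := by
  have hsup : ∀ᵉ (f ∈ closure (ratMaxAffineDiff C)) (g ∈ closure (ratMaxAffineDiff C)),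
      f ⊔ g ∈ closure (ratMaxAffineDiff C) := fun f hf g hg =>
    map_mem_closure₂ ContinuousMap.lipschitzWith_sup.continuous hf hg
      fun _ h₁ _ h₂ => sup_mem_ratMaxAffineDiff h₁ h₂
  have hneg : ∀ f ∈ closure (ratMaxAffineDiff C), -f ∈ closure (ratMaxAffineDiff C) :=
    fun f hf => map_mem_closure continuous_neg hf fun _ => neg_mem_ratMaxAffineDiff
  have hinf : ∀ᵉ (f ∈ closure (ratMaxAffineDiff C)) (g ∈ closure (ratMaxAffineDiff C)),
      f ⊓ g ∈ closure (ratMaxAffineDiff C) := fun f hf g hg => by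
    simpa [neg_sup] using hneg _ (hsup _ (hneg f hf) _ (hneg g hg))
  have hsep : (closure (ratMaxAffineDiff C)).SeparatesPointsStrongly := fun v x y => by
    obtain ⟨_, ⟨q, rfl⟩, hx, hy⟩ := separatesPointsStrongly_affineOn_range v x y
    exact ⟨_, affineOn_mem_closure_ratMaxAffineDiff q, hx, hy⟩
  simpa using ContinuousMap.sublattice_closure_eq_top _
    ⟨_, affineOn_mem_closure_ratMaxAffineDiff 0⟩ hinf hsup hsep

lemma exists_ratMaxAffine_sub_near (hC : IsCompact C) {h : (ι → ℝ) → ℝ} (hh : ContinuousOn h C)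
    {δ : ℝ} (hδ : 0 < δ) :
    ∃ (S T : Finset ((ι → ℚ) × ℚ)) (hS : S.Nonempty) (hT : T.Nonempty),
      ∀ y ∈ C, |ratMaxAffine S hS y - ratMaxAffine T hT y - h y| < δ := by
  have := isCompact_iff_compactSpace.mp hC
  have hmem : (⟨C.domRestrict h, hh.domRestrict⟩ : C(C, ℝ)) ∈ closure (ratMaxAffineDiff C) := by
    rw [closure_ratMaxAffineDiff_eq_top]; trivial
  obtain ⟨f, ⟨S, T, hS, hT, hf⟩, hdist⟩ := Metric.mem_closure_iff.mp hmem δ hδ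
  refine ⟨S, T, hS, hT, fun y hy => ?_⟩
  rw [← hf ⟨y, hy⟩, abs_sub_comm]
  exact (ContinuousMap.dist_apply_le_dist ⟨y, hy⟩).trans_lt hdist

end Density

lemma exists_ratMaxAffine_sub_near_log {ι : Type*} [Fintype ι] {R : Set (ι → ℝ)}
    (hpos : ∀ x ∈ R, ∀ i, 0 < x i) (hR : IsCompact R) {ℓ : (ι → ℝ) → ℝ}
    (hℓpos : ∀ x ∈ R, 0 < ℓ x) (hℓ : ContinuousOn ℓ R) {δ : ℝ} (hδ : 0 < δ) :
    ∃ (S T : Finset ((ι → ℚ) × ℚ)) (hS : S.Nonempty) (hT : T.Nonempty), ∀ x ∈ R,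
      |ratMaxAffine S hS (fun i => log (x i)) - ratMaxAffine T hT (fun i => log (x i))
        - log (ℓ x)| < δ := by
  have hexp_log {x : ι → ℝ} (hx : x ∈ R) : (fun i => exp (log (x i))) = x :=
    funext fun i => exp_log (hpos x hx i)
  have hlog : ContinuousOn (fun x : ι → ℝ => fun i => log (x i)) R :=
    continuousOn_pi.2 fun i => (continuousOn_apply i R).log fun x hx => (hpos x hx i).ne'
  have hexp : Set.MapsTo (fun y : ι → ℝ => fun i => exp (y i)) ((fun x i => log (x i)) '' R) R := by
    rintro _ ⟨x, hx, rfl⟩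
    simpa only [hexp_log hx] using hx
  obtain ⟨S, T, hS, hT, h⟩ := exists_ratMaxAffine_sub_near (hR.image_of_continuousOn hlog)
    (h := fun y => log (ℓ fun i => exp (y i)))
    ((hℓ.comp (by fun_prop) hexp).log fun y hy => (hℓpos _ (hexp hy)).ne') hδ
  refine ⟨S, T, hS, hT, fun x hx => ?_⟩
  simpa only [hexp_log hx] using h _ ⟨x, hx, rfl⟩

lemma abs_log_sum_exp_mul_div_sub_sup'_le {α : Type*} {s : Finset α} (hs : s.Nonempty)
    (f : α → ℝ) {p : ℝ} (hp : 0 < p) :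
    |log (∑ a ∈ s, exp (p * f a)) / p - s.sup' hs f| ≤ log #s / p := by
  have hsum_pos : 0 < ∑ a ∈ s, exp (p * f a) := sum_pos (fun _ _ => exp_pos _) hs
  have hlower : p * s.sup' hs f ≤ log (∑ a ∈ s, exp (p * f a)) := by
    obtain ⟨a, ha, hfa⟩ := s.exists_mem_eq_sup' hs f
    rw [hfa, le_log_iff_exp_le hsum_pos]
    exact single_le_sum (f := fun a => exp (p * f a)) (fun _ _ => (exp_pos _).le) ha
  have hupper : log (∑ a ∈ s, exp (p * f a)) ≤ log #s + p * s.sup' hs f := by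
    have hle : ∑ a ∈ s, exp (p * f a) ≤ #s * exp (p * s.sup' hs f) := by
      simpa using sum_le_card_nsmul s _ _ fun a ha =>
        exp_le_exp.2 (mul_le_mul_of_nonneg_left (le_sup' f ha) hp.le)
    calc _ ≤ log (#s * exp (p * s.sup' hs f)) := log_le_log hsum_pos hle
      _ = _ := by rw [log_mul (by simp [hs.ne_empty]) (exp_pos _).ne', log_exp]
  rw [abs_sub_le_iff]
  constructor
  · rw [sub_le_iff_le_add', div_le_iff₀ hp, add_mul, div_mul_cancel₀ _ hp.ne']
    linarith
  · have : s.sup' hs f ≤ log (∑ a ∈ s, exp (p * f a)) / p := by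
      rw [le_div_iff₀ hp]
      linarith
    linarith [div_nonneg (log_natCast_nonneg #s) hp.le]

section Gpos

variable {ι κ : Type*} [Fintype ι] [Fintype κ]

noncomputable def gpos (T : ℝ) (c : κ → ℝ) (α : κ → ι → ℝ) (x : ι → ℝ) : ℝ :=
  (∑ k, c k * ∏ i, (x i ^ (1 / T)) ^ α k i) ^ T

lemma gpos_pos [Nonempty κ] {T : ℝ} {c : κ → ℝ} (hc : ∀ k, 0 < c k) (α : κ → ι → ℝ)
    {x : ι → ℝ} (hx : ∀ i, 0 < x i) : 0 < gpos T c α x :=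
  rpow_pos_of_pos (sum_pos (fun k _ => mul_pos (hc k) (prod_pos fun i _ =>
    rpow_pos_of_pos (rpow_pos_of_pos (hx i) _) _)) univ_nonempty) _

lemma exp_mul_mul_prod_rpow_rpow {x : ι → ℝ} (hx : ∀ i, 0 < x i) (p b : ℝ) (a : ι → ℝ) :
    exp (p * b) * ∏ i, (x i ^ p) ^ a i = exp (p * (∑ i, a i * log (x i) + b)) := by
  simp_rw [← rpow_mul (hx _).le, rpow_def_of_pos (hx _), ← exp_sum, ← exp_add, mul_add, mul_sum]
  rw [add_comm]
  congr 2
  exact sum_congr rfl fun i _ => by ring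

lemma log_gpos_exp_mul (p : ℝ) (b : κ → ℝ) (a : κ → ι → ℝ) {x : ι → ℝ}
    (hx : ∀ i, 0 < x i) [Nonempty κ] :
    log (gpos (1 / p) (fun k => exp (p * b k)) a x) =
      log (∑ k, exp (p * (∑ i, a k i * log (x i) + b k))) / p := by
  rw [gpos, one_div_one_div]
  simp_rw [exp_mul_mul_prod_rpow_rpow hx]
  rw [log_rpow (sum_pos (fun _ _ => exp_pos _) univ_nonempty)]
  ring

end Gpos

lemma exists_gpos_near_ratMaxAffine {ι : Type*} [Fintype ι] {S : Finset ((ι → ℚ) × ℚ)}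
    (hS : S.Nonempty) {p : ℕ} (hp : 0 < p) :
    ∃ K : ℕ, 0 < K ∧ ∃ (c : Fin K → ℝ) (α : Fin K → ι → ℝ), (∀ k, 0 < c k) ∧
      (∀ k i, ∃ q : ℚ, α k i = q) ∧ (∀ k, ∃ q : ℚ, log (c k) = q) ∧
      ∀ x : ι → ℝ, (∀ i, 0 < x i) → 0 < gpos (1 / p) c α x ∧
        |log (gpos (1 / p) c α x) - ratMaxAffine S hS (fun i => log (x i))| ≤ log #S / p := by
  set e := S.equivFin.symm
  have hK := hS.card_pos
  have := Fin.pos_iff_nonempty.1 hK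
  refine ⟨#S, hK, fun k => exp (p * (e k).1.2), fun k i => (e k).1.1 i, fun _ => exp_pos _,
    fun k i => ⟨_, rfl⟩, fun k => ⟨p * (e k).1.2, by rw [log_exp]; push_cast; rfl⟩,
    fun x hx => ⟨gpos_pos (fun _ => exp_pos _) _ hx, ?_⟩⟩
  rw [log_gpos_exp_mul _ _ _ hx,
    e.sum_comp (fun q : S => exp (p * (∑ i, (q.1.1 i : ℝ) * log (x i) + q.1.2))),
    sum_coe_sort S (fun q => exp (p * (∑ i, (q.1 i : ℝ) * log (x i) + q.2)))]
  exact abs_log_sum_exp_mul_div_sub_sup'_le hS _ (Nat.cast_pos.2 hp)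

lemma abs_sub_div_min_eq_exp_abs_log_sub_sub_one {a b : ℝ} (ha : 0 < a) (hb : 0 < b) :
    |(a - b) / min a b| = exp |log a - log b| - 1 := by
  wlog hba : b ≤ a generalizing a b
  · rw [min_comm, abs_sub_comm (log a), ← abs_neg, ← neg_div, neg_sub]
    exact this hb ha (le_of_not_ge hba)
  rw [min_eq_right hba, abs_of_nonneg (div_nonneg (sub_nonneg.2 hba) hb.le),
    abs_of_nonneg (sub_nonneg.2 (log_le_log hb hba)), exp_sub, exp_log ha, exp_log hb, sub_div,
    div_self hb.ne']

theorem gpos_ratio_universal_approx_general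
    (n : ℕ) (R : Set (Fin n → ℝ)) (hpos : ∀ x ∈ R, ∀ i, 0 < x i)
    (hcomp : IsCompact R)
    (ℓ : (Fin n → ℝ) → ℝ) (hℓpos : ∀ x ∈ R, 0 < ℓ x) (hcont : ContinuousOn ℓ R)
    (ε : ℝ) (hε : 0 < ε) :
    ∃ (p : ℕ), 0 < p ∧
      ∃ (T : ℝ), T = 1 / (p : ℝ) ∧
        ∃ (K K' : ℕ), 0 < K ∧ 0 < K' ∧
          ∃ (c : Fin K → ℝ) (α : Fin K → Fin n → ℝ)
            (c' : Fin K' → ℝ) (α' : Fin K' → Fin n → ℝ),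
            (∀ k, 0 < c k) ∧ (∀ k, 0 < c' k) ∧
            (∀ k i, ∃ q : ℚ, α k i = (q : ℝ)) ∧
            (∀ k, ∃ q : ℚ, Real.log (c k) = (q : ℝ)) ∧
            (∀ k i, ∃ q : ℚ, α' k i = (q : ℝ)) ∧
            (∀ k, ∃ q : ℚ, Real.log (c' k) = (q : ℝ)) ∧
            ∀ x ∈ R,
              |(ℓ x - ((∑ k, c k * ∏ i, (x i ^ (1 / T)) ^ α k i) ^ T)
                      / ((∑ k, c' k * ∏ i, (x i ^ (1 / T)) ^ α' k i) ^ T))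
                / min (ℓ x)
                    (((∑ k, c k * ∏ i, (x i ^ (1 / T)) ^ α k i) ^ T)
                      / ((∑ k, c' k * ∏ i, (x i ^ (1 / T)) ^ α' k i) ^ T))| ≤ ε := by
  set δ := log (1 + ε)
  have hδ : 0 < δ := log_pos (by linarith)
  obtain ⟨S, S', hS, hS', happrox⟩ :=
    exists_ratMaxAffine_sub_near_log hpos hcomp hℓpos hcont (half_pos hδ)
  obtain ⟨p, hp⟩ := exists_nat_gt ((log #S + log #S') / (δ / 2))
  have hp₀ : (0 : ℝ) < p := lt_of_le_of_lt (div_nonneg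
    (add_nonneg (log_natCast_nonneg _) (log_natCast_nonneg _)) (half_pos hδ).le) hp
  have hp_err : log #S / p + log #S' / p < δ / 2 := by
    rwa [← add_div, div_lt_iff₀ hp₀, mul_comm, ← div_lt_iff₀ (half_pos hδ)]
  obtain ⟨K, hK, c, α, hc, hα, hlogc, hψ⟩ := exists_gpos_near_ratMaxAffine hS (Nat.cast_pos.1 hp₀)
  obtain ⟨K', hK', c', α', hc', hα', hlogc', hψ'⟩ :=
    exists_gpos_near_ratMaxAffine hS' (Nat.cast_pos.1 hp₀)
  refine ⟨p, Nat.cast_pos.1 hp₀, 1 / p, rfl, K, K', hK, hK', c, α, c', α', hc, hc', hα, hlogc,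
    hα', hlogc', fun x hx => ?_⟩
  obtain ⟨hψpos, h₂⟩ := hψ x (hpos x hx)
  obtain ⟨hψpos', h₃⟩ := hψ' x (hpos x hx)
  change |(ℓ x - gpos (1 / p) c α x / gpos (1 / p) c' α' x)
    / min (ℓ x) (gpos (1 / p) c α x / gpos (1 / p) c' α' x)| ≤ ε
  rw [abs_sub_div_min_eq_exp_abs_log_sub_sub_one (hℓpos x hx) (div_pos hψpos hψpos'),
    sub_le_iff_le_add, ← exp_log (by linarith : 0 < ε + 1), exp_le_exp, add_comm ε,
    log_div hψpos.ne' hψpos'.ne', abs_le]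
  have h₁ := (happrox x hx).le
  rw [abs_le] at h₁ h₂ h₃
  constructor <;> linarith

/-- **Universal approximation of positive functions on the open orthant by ratios of
GPOS_T functions with rational parameters.**
Let `R ⊂ ℝ_{>0}ⁿ` be a compact log-convex set and `ℓ : R → ℝ_{>0}` a continuous positive
function.  Then for every `ε > 0` there exist a positive integer `p`, `T = 1/p`, and two
functions `ψ_T, ψ′_T ∈ GPOS_T` with rational parameters such that
`|(ℓ(x) − ψ_T(x)/ψ′_T(x)) / min(ℓ(x), ψ_T(x)/ψ′_T(x))| ≤ ε` for all `x ∈ R`. -/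
theorem gpos_ratio_universal_approx
    (n : ℕ) (R : Set (Fin n → ℝ)) (hpos : ∀ x ∈ R, ∀ i, 0 < x i)
    (hcomp : IsCompact R)
    (hlogconv : Convex ℝ ((fun x => fun i => Real.log (x i)) '' R))
    (ℓ : (Fin n → ℝ) → ℝ) (hℓpos : ∀ x ∈ R, 0 < ℓ x) (hcont : ContinuousOn ℓ R)
    (ε : ℝ) (hε : 0 < ε) :
    ∃ (p : ℕ), 0 < p ∧
      ∃ (T : ℝ), T = 1 / (p : ℝ) ∧
        ∃ (K K' : ℕ), 0 < K ∧ 0 < K' ∧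
          ∃ (c : Fin K → ℝ) (α : Fin K → Fin n → ℝ)
            (c' : Fin K' → ℝ) (α' : Fin K' → Fin n → ℝ),
            (∀ k, 0 < c k) ∧ (∀ k, 0 < c' k) ∧
            (∀ k i, ∃ q : ℚ, α k i = (q : ℝ)) ∧
            (∀ k, ∃ q : ℚ, Real.log (c k) = (q : ℝ)) ∧
            (∀ k i, ∃ q : ℚ, α' k i = (q : ℝ)) ∧
            (∀ k, ∃ q : ℚ, Real.log (c' k) = (q : ℝ)) ∧
            ∀ x ∈ R,
              |(ℓ x - ((∑ k, c k * ∏ i, (x i ^ (1 / T)) ^ α k i) ^ T)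
                      / ((∑ k, c' k * ∏ i, (x i ^ (1 / T)) ^ α' k i) ^ T))
                / min (ℓ x)
                    (((∑ k, c k * ∏ i, (x i ^ (1 / T)) ^ α k i) ^ T)
                      / ((∑ k, c' k * ∏ i, (x i ^ (1 / T)) ^ α' k i) ^ T))| ≤ ε :=
  gpos_ratio_universal_approx_general n R hpos hcomp ℓ hℓpos hcont ε hε
end

section
/- Let R ⊂ ℝ_{>0}ⁿ be a compact log-convex set and let ℓ : R → ℝ_{>0} be a continuous positive function. Then for every ε > 0 there exist positive integers p, q and two polynomials P, Q in n variables with positive real coefficients and nonnegative integer exponents such that the function f(x) = (P(x_1^{1/q}, …, x_n^{1/q}) / Q(x_1^{1/q}, …, x_n^{1/q}))^{1/p} satisfies |(ℓ(x) − f(x)) / min(ℓ(x), f(x))| ≤ ε for all x ∈ R. -/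
/-!
Work in logarithmic coordinates `y = log x`, where `log R` is compact and the target is
`g = log ∘ ℓ ∘ exp`. Call `f` a root log-ratio if `p • f = log P(eʸ) - log Q(eʸ)` for some
`p > 0` and nonzero polynomials `P`, `Q` with nonnegative coefficients, so that
`exp f = (P / Q)^(1/p)`. Root log-ratios contain the constants and the affine functions with
rational slopes, are closed under negation, and `log (e^{N f} + e^{N g}) / N` is a root log-ratio
within `log 2 / N` of `max f g`. Their restrictions to `log R` therefore have a closure which is a
lattice separating points strongly, hence is all of `C(log R, ℝ)` by the lattice version of
Stone–Weierstrass. A log-error of `log (1 + ε)` is a relative error of `ε`. The `p`-th root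
already provides rational exponents, so `q = 1` suffices.
-/

open Real MvPolynomial

theorem max_le_log_exp_add_exp (u v : ℝ) : max u v ≤ log (exp u + exp v) := by
  rw [le_log_iff_exp_le (by positivity)]
  rcases le_total u v with h | h
  · rw [max_eq_right h]; linarith [exp_pos u]
  · rw [max_eq_left h]; linarith [exp_pos v]

theorem log_exp_add_exp_le (u v : ℝ) : log (exp u + exp v) ≤ max u v + log 2 := by
  rw [log_le_iff_le_exp (by positivity), exp_add, exp_log two_pos]
  linarith [exp_le_exp.2 (le_max_left u v), exp_le_exp.2 (le_max_right u v)]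

theorem abs_log_exp_add_exp_div_sub_max_le (u v : ℝ) {N : ℝ} (hN : 0 < N) :
    |log (exp (N * u) + exp (N * v)) / N - max u v| ≤ log 2 / N := by
  have hmax : max (N * u) (N * v) = N * max u v := (mul_max_of_nonneg u v hN.le).symm
  have lower := max_le_log_exp_add_exp (N * u) (N * v)
  have upper := log_exp_add_exp_le (N * u) (N * v)
  rw [hmax] at lower upper
  rw [div_sub' hN.ne', abs_div, abs_of_pos hN, div_le_div_iff_of_pos_right hN, abs_le]
  constructor <;> linarith

theorem log_div_add_div {a b c d : ℝ} (ha : 0 < a) (hb : 0 < b) (hc : 0 < c) (hd : 0 < d) :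
    log (a / b + c / d) = log (a * d + c * b) - log (b * d) := by
  rw [div_add_div _ _ hb.ne' hd.ne', log_div (by positivity) (by positivity), mul_comm b c]

theorem abs_sub_div_min_le_of_abs_log_sub_log_le {a b ε : ℝ} (ha : 0 < a) (hb : 0 < b)
    (hε : 0 < 1 + ε) (h : |log a - log b| ≤ log (1 + ε)) : |(a - b) / min a b| ≤ ε := by
  wlog hba : b ≤ a generalizing a b
  · have := this hb ha (by rwa [abs_sub_comm]) (le_of_not_ge hba)
    rwa [← neg_sub, neg_div, abs_neg, min_comm]
  have hlog : log (a / b) ≤ log (1 + ε) := by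
    rw [log_div ha.ne' hb.ne']
    exact (le_abs_self _).trans h
  rw [min_eq_right hba, abs_of_nonneg (div_nonneg (sub_nonneg.2 hba) hb.le), sub_div,
    div_self hb.ne']
  linarith [(log_le_log_iff (div_pos ha hb) hε).1 hlog]

namespace ContinuousMap

variable {X : Type*} [TopologicalSpace X] [CompactSpace X]

theorem lipschitzWith_one_sup :
    LipschitzWith 1 (fun fg : C(X, ℝ) × C(X, ℝ) => fg.1 ⊔ fg.2) :=
  LipschitzWith.of_dist_le_mul fun f g => by
    rw [NNReal.coe_one, one_mul, Prod.dist_eq]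
    refine (dist_le (le_max_of_le_left dist_nonneg)).2 fun x => ?_
    have h₁ := dist_apply_le_dist (f := f.1) (g := g.1) x
    have h₂ := dist_apply_le_dist (f := f.2) (g := g.2) x
    rw [Real.dist_eq] at h₁ h₂ ⊢
    exact (abs_max_sub_max_le_max _ _ _ _).trans (max_le_max h₁ h₂)

theorem closure_eq_top_of_sup_mem_closure (T : Set C(X, ℝ)) (hne : T.Nonempty)
    (hneg : ∀ f ∈ T, -f ∈ T) (hsup : ∀ f ∈ T, ∀ g ∈ T, f ⊔ g ∈ closure T)
    (hsep : (closure T).SeparatesPointsStrongly) : closure T = ⊤ := by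
  have sup_mem : ∀ f ∈ closure T, ∀ g ∈ closure T, f ⊔ g ∈ closure T := fun f hf g hg =>
    closure_closure (s := T) ▸
      map_mem_closure₂ lipschitzWith_one_sup.continuous hf hg hsup
  have neg_mem : ∀ f ∈ closure T, -f ∈ closure T := fun f hf =>
    map_mem_closure continuous_neg hf hneg
  have inf_mem : ∀ f ∈ closure T, ∀ g ∈ closure T, f ⊓ g ∈ closure T := by
    intro f hf g hg
    rw [← neg_neg (f ⊓ g), neg_inf]
    exact neg_mem _ (sup_mem _ (neg_mem f hf) _ (neg_mem g hg))
  simpa only [closure_closure] using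
    sublattice_closure_eq_top (closure T) hne.closure inf_mem sup_mem hsep

end ContinuousMap

namespace MvPolynomial

variable {σ : Type*}

def IsSubtractionFree (P : MvPolynomial σ ℝ) : Prop :=
  P ≠ 0 ∧ ∀ d, 0 ≤ P.coeff d

namespace IsSubtractionFree

variable {P Q : MvPolynomial σ ℝ}

theorem C {c : ℝ} (hc : 0 < c) : IsSubtractionFree (C c : MvPolynomial σ ℝ) := by
  classical
  refine ⟨C_ne_zero.2 hc.ne', fun d => ?_⟩
  rw [coeff_C]
  split_ifs <;> positivity

theorem one : IsSubtractionFree (1 : MvPolynomial σ ℝ) := by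
  simpa using C (σ := σ) one_pos

theorem X (i : σ) : IsSubtractionFree (X i : MvPolynomial σ ℝ) := by
  classical
  refine ⟨X_ne_zero i, fun d => ?_⟩
  rw [coeff_X]
  split_ifs <;> norm_num

theorem mul (hP : IsSubtractionFree P) (hQ : IsSubtractionFree Q) :
    IsSubtractionFree (P * Q) := by
  classical
  exact ⟨mul_ne_zero hP.1 hQ.1, fun d => by
    rw [coeff_mul]
    exact Finset.sum_nonneg fun x _ => mul_nonneg (hP.2 _) (hQ.2 _)⟩

theorem add (hP : IsSubtractionFree P) (hQ : IsSubtractionFree Q) :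
    IsSubtractionFree (P + Q) := by
  refine ⟨fun h => hP.1 ?_, fun d => by rw [coeff_add]; exact add_nonneg (hP.2 d) (hQ.2 d)⟩
  ext d
  have hd : P.coeff d + Q.coeff d = 0 := by rw [← coeff_add, h, coeff_zero]
  rw [coeff_zero]
  linarith [hP.2 d, hQ.2 d]

theorem coeff_pos (hP : IsSubtractionFree P) {d : σ →₀ ℕ} (hd : d ∈ P.support) :
    0 < P.coeff d :=
  (hP.2 d).lt_of_ne (mem_support_iff.1 hd).symm

theorem eval_pos (hP : IsSubtractionFree P) {x : σ → ℝ} (hx : ∀ i, 0 < x i) :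
    0 < eval x P := by
  rw [eval_eq]
  exact Finset.sum_pos (fun d hd => mul_pos (hP.coeff_pos hd)
    (Finset.prod_pos fun i _ => pow_pos (hx i) _)) (support_nonempty.2 hP.1)

theorem exists_fin_sum_eq [Fintype σ] (hP : IsSubtractionFree P) :
    ∃ K, 0 < K ∧ ∃ (c : Fin K → ℝ) (a : Fin K → σ → ℕ), (∀ k, 0 < c k) ∧
      ∀ x, eval x P = ∑ k, c k * ∏ i, x i ^ a k i := by
  let e := P.support.equivFin
  refine ⟨P.support.card, Finset.card_pos.2 (support_nonempty.2 hP.1),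
    fun k => P.coeff (e.symm k), fun k => e.symm k, fun k => hP.coeff_pos (e.symm k).2,
    fun x => ?_⟩
  rw [eval_eq', ← Finset.sum_coe_sort, ← e.symm.sum_comp]

end IsSubtractionFree

noncomputable def logEvalExp (P : MvPolynomial σ ℝ) (y : σ → ℝ) : ℝ :=
  log (eval (fun i => exp (y i)) P)

variable {P Q : MvPolynomial σ ℝ}

theorem IsSubtractionFree.exp_logEvalExp (hP : IsSubtractionFree P) (y : σ → ℝ) :
    exp (logEvalExp P y) = eval (fun i => exp (y i)) P :=
  exp_log (hP.eval_pos fun i => exp_pos (y i))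

theorem IsSubtractionFree.continuous_logEvalExp (hP : IsSubtractionFree P) :
    Continuous (logEvalExp P) :=
  ((continuous_eval P).comp (continuous_pi fun i => (continuous_apply i).rexp)).log
    fun y => (hP.eval_pos fun i => exp_pos (y i)).ne'

theorem IsSubtractionFree.logEvalExp_mul (hP : IsSubtractionFree P) (hQ : IsSubtractionFree Q) :
    logEvalExp (P * Q) = logEvalExp P + logEvalExp Q := by
  funext y
  rw [logEvalExp, eval_mul, log_mul (hP.eval_pos fun i => exp_pos (y i)).ne'
    (hQ.eval_pos fun i => exp_pos (y i)).ne']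
  rfl

theorem logEvalExp_C (c : ℝ) : logEvalExp (C c : MvPolynomial σ ℝ) = fun _ => log c := by
  funext y
  rw [logEvalExp, eval_C]

theorem logEvalExp_one : logEvalExp (1 : MvPolynomial σ ℝ) = 0 := by
  funext y
  simp [logEvalExp]

theorem logEvalExp_X (i : σ) : logEvalExp (X i : MvPolynomial σ ℝ) = fun y => y i := by
  funext y
  rw [logEvalExp, eval_X, log_exp]

end MvPolynomial

namespace SubtractionFree

variable (σ : Type*)

def logRatios : AddSubgroup ((σ → ℝ) → ℝ) where
  carrier := {f | ∃ P Q : MvPolynomial σ ℝ, P.IsSubtractionFree ∧ Q.IsSubtractionFree ∧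
    f = logEvalExp P - logEvalExp Q}
  zero_mem' := ⟨1, 1, .one, .one, (sub_self _).symm⟩
  add_mem' := by
    rintro _ _ ⟨P₁, Q₁, hP₁, hQ₁, rfl⟩ ⟨P₂, Q₂, hP₂, hQ₂, rfl⟩
    refine ⟨P₁ * P₂, Q₁ * Q₂, hP₁.mul hP₂, hQ₁.mul hQ₂, ?_⟩
    rw [hP₁.logEvalExp_mul hP₂, hQ₁.logEvalExp_mul hQ₂]
    abel
  neg_mem' := by
    rintro _ ⟨P, Q, hP, hQ, rfl⟩
    exact ⟨Q, P, hQ, hP, (neg_sub _ _)⟩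

def rootLogRatios : Set ((σ → ℝ) → ℝ) :=
  {f | ∃ p : ℕ, 0 < p ∧ p • f ∈ logRatios σ}

variable {σ}

theorem const_mem_logRatios (c : ℝ) : (fun _ => c) ∈ logRatios σ :=
  ⟨C (exp c), 1, .C (exp_pos c), .one, by rw [logEvalExp_C, logEvalExp_one, log_exp, sub_zero]⟩

theorem coord_mem_logRatios (i : σ) : (fun y => y i) ∈ logRatios σ :=
  ⟨X i, 1, .X i, .one, by rw [logEvalExp_X, logEvalExp_one, sub_zero]⟩

theorem continuous_of_mem_logRatios {f : (σ → ℝ) → ℝ} (hf : f ∈ logRatios σ) :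
    Continuous f := by
  obtain ⟨P, Q, hP, hQ, rfl⟩ := hf
  exact hP.continuous_logEvalExp.sub hQ.continuous_logEvalExp

theorem log_exp_add_exp_mem_logRatios {f g : (σ → ℝ) → ℝ} (hf : f ∈ logRatios σ)
    (hg : g ∈ logRatios σ) : (fun y => log (exp (f y) + exp (g y))) ∈ logRatios σ := by
  obtain ⟨P₁, Q₁, hP₁, hQ₁, rfl⟩ := hf
  obtain ⟨P₂, Q₂, hP₂, hQ₂, rfl⟩ := hg
  refine ⟨P₁ * Q₂ + P₂ * Q₁, Q₁ * Q₂, (hP₁.mul hQ₂).add (hP₂.mul hQ₁), hQ₁.mul hQ₂,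
    funext fun y => ?_⟩
  have hpos {P : MvPolynomial σ ℝ} (hP : P.IsSubtractionFree) :
      0 < eval (fun i => exp (y i)) P :=
    hP.eval_pos fun i => exp_pos (y i)
  rw [Pi.sub_apply, Pi.sub_apply, exp_sub, exp_sub, hP₁.exp_logEvalExp, hQ₁.exp_logEvalExp,
    hP₂.exp_logEvalExp, hQ₂.exp_logEvalExp,
    log_div_add_div (hpos hP₁) (hpos hQ₁) (hpos hP₂) (hpos hQ₂)]
  simp only [Pi.sub_apply, logEvalExp, eval_add, eval_mul]

theorem const_mem_rootLogRatios (c : ℝ) : (fun _ => c) ∈ rootLogRatios σ :=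
  ⟨1, one_pos, by simpa only [one_smul] using const_mem_logRatios c⟩

theorem continuous_of_mem_rootLogRatios {f : (σ → ℝ) → ℝ} (hf : f ∈ rootLogRatios σ) :
    Continuous f := by
  obtain ⟨p, hp, hpf⟩ := hf
  have hf : f = (p : ℝ)⁻¹ • (p • f) := by
    rw [← Nat.cast_smul_eq_nsmul ℝ, smul_smul, inv_mul_cancel₀ (by positivity), one_smul]
  rw [hf]
  exact (continuous_of_mem_logRatios hpf).const_smul _

theorem neg_mem_rootLogRatios {f : (σ → ℝ) → ℝ} (hf : f ∈ rootLogRatios σ) :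
    -f ∈ rootLogRatios σ := by
  obtain ⟨p, hp, hpf⟩ := hf
  exact ⟨p, hp, by simpa only [smul_neg] using neg_mem hpf⟩

theorem affine_mem_rootLogRatios (c : ℝ) (r : ℚ) (i : σ) :
    (fun y => c + r * y i) ∈ rootLogRatios σ := by
  refine ⟨r.den, r.den_pos, ?_⟩
  have h : r.den • (fun y => c + r * y i) =
      (fun _ => r.den * c) + r.num • (fun y : σ → ℝ => y i) := by
    funext y
    rw [Pi.add_apply, Pi.smul_apply, Pi.smul_apply, nsmul_eq_mul, zsmul_eq_mul, Rat.cast_def]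
    field_simp
  rw [h]
  exact add_mem (const_mem_logRatios _) (zsmul_mem (coord_mem_logRatios i) _)

theorem exists_mem_rootLogRatios_abs_sub_max_le {f g : (σ → ℝ) → ℝ}
    (hf : f ∈ rootLogRatios σ) (hg : g ∈ rootLogRatios σ) {m : ℕ} (hm : 0 < m) :
    ∃ h ∈ rootLogRatios σ, ∀ y, |h y - max (f y) (g y)| ≤ log 2 / m := by
  obtain ⟨p, hp, hpf⟩ := hf
  obtain ⟨p', hp', hpg⟩ := hg
  set N := m * p * p'
  have hN : 0 < N := by positivity
  have hNf : N • f ∈ logRatios σ := by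
    simpa only [smul_smul, mul_right_comm m p' p] using nsmul_mem hpf (m * p')
  have hNg : N • g ∈ logRatios σ := by
    simpa only [smul_smul] using nsmul_mem hpg (m * p)
  refine ⟨fun y => log (exp (N * f y) + exp (N * g y)) / N, ⟨N, hN, ?_⟩, fun y => ?_⟩
  · convert log_exp_add_exp_mem_logRatios hNf hNg using 2 with y
    simp only [Pi.smul_apply, nsmul_eq_mul]
    field_simp
  · refine (abs_log_exp_add_exp_div_sub_max_le _ _ (by positivity)).trans ?_
    gcongr
    exact Nat.le_mul_of_pos_right m (by positivity) |>.trans (Nat.le_mul_of_pos_right _ hp')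

variable (K : Set (σ → ℝ))

def rootLogRatiosOn : Set C(K, ℝ) :=
  {F | ∃ f ∈ rootLogRatios σ, ∀ z : K, F z = f z}

variable {K}

theorem restrict_mem_rootLogRatiosOn {f : (σ → ℝ) → ℝ} (hf : f ∈ rootLogRatios σ) :
    (⟨fun z => f z, (continuous_of_mem_rootLogRatios hf).comp continuous_subtype_val⟩ :
      C(K, ℝ)) ∈ rootLogRatiosOn K :=
  ⟨f, hf, fun _ => rfl⟩

theorem neg_mem_rootLogRatiosOn {F : C(K, ℝ)} (hF : F ∈ rootLogRatiosOn K) :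
    -F ∈ rootLogRatiosOn K := by
  obtain ⟨f, hf, hFf⟩ := hF
  exact ⟨-f, neg_mem_rootLogRatios hf, fun z => by simp [hFf z]⟩

theorem sup_mem_closure_rootLogRatiosOn [CompactSpace K] {F G : C(K, ℝ)}
    (hF : F ∈ rootLogRatiosOn K) (hG : G ∈ rootLogRatiosOn K) :
    F ⊔ G ∈ closure (rootLogRatiosOn K) := by
  obtain ⟨f, hf, hFf⟩ := hF
  obtain ⟨g, hg, hGg⟩ := hG
  refine Metric.mem_closure_iff.2 fun ε hε => ?_
  obtain ⟨m, hm⟩ := exists_nat_gt (log 2 / ε)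
  have hm₀ : 0 < m := by exact_mod_cast (div_pos (log_pos one_lt_two) hε).trans hm
  obtain ⟨h, hh, hclose⟩ := exists_mem_rootLogRatios_abs_sub_max_le hf hg hm₀
  refine ⟨_, restrict_mem_rootLogRatiosOn hh, ?_⟩
  calc dist (F ⊔ G) _ ≤ log 2 / m := by
        refine (ContinuousMap.dist_le (by positivity)).2 fun z => ?_
        rw [ContinuousMap.sup_apply, hFf z, hGg z, dist_comm, Real.dist_eq]
        exact hclose z
    _ < ε := by rwa [div_lt_iff₀ (by positivity), mul_comm, ← div_lt_iff₀ hε]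

theorem affine_mem_closure_rootLogRatiosOn (c ρ : ℝ) (i : σ) :
    ContinuousMap.const K c + ρ • (ContinuousMap.eval i).restrict K ∈
      closure (rootLogRatiosOn K) := by
  have hφ : Continuous fun ρ : ℝ =>
      ContinuousMap.const K c + ρ • (ContinuousMap.eval i).restrict K :=
    continuous_const.add (continuous_id.smul continuous_const)
  refine Rat.denseRange_cast.induction_on ρ (isClosed_closure.preimage hφ) fun r =>
    subset_closure ⟨_, affine_mem_rootLogRatios c r i, fun z => ?_⟩
  simp

theorem separatesPointsStrongly_closure_rootLogRatiosOn :
    (closure (rootLogRatiosOn K)).SeparatesPointsStrongly := by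
  intro v x y
  by_cases hxy : x = y
  · subst hxy
    exact ⟨_, subset_closure (restrict_mem_rootLogRatiosOn (const_mem_rootLogRatios (v x))),
      rfl, rfl⟩
  obtain ⟨i, hi⟩ := Function.ne_iff.1 (Subtype.coe_injective.ne hxy)
  have hi' : (y : σ → ℝ) i - (x : σ → ℝ) i ≠ 0 := sub_ne_zero.2 (Ne.symm hi)
  set ρ := (v y - v x) / ((y : σ → ℝ) i - (x : σ → ℝ) i)
  refine ⟨_, affine_mem_closure_rootLogRatiosOn (v x - ρ * (x : σ → ℝ) i) ρ i, ?_, ?_⟩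
  · simp
  · simp only [ContinuousMap.add_apply, ContinuousMap.const_apply, ContinuousMap.smul_apply,
      ContinuousMap.restrict_apply, ContinuousMap.eval_apply, smul_eq_mul, ρ]
    field_simp
    ring

theorem exists_mem_rootLogRatios_abs_sub_le (hK : IsCompact K) {g : (σ → ℝ) → ℝ}
    (hg : ContinuousOn g K) {δ : ℝ} (hδ : 0 < δ) :
    ∃ f ∈ rootLogRatios σ, ∀ y ∈ K, |g y - f y| ≤ δ := by
  have : CompactSpace K := isCompact_iff_compactSpace.1 hK
  have hdense := ContinuousMap.closure_eq_top_of_sup_mem_closure (rootLogRatiosOn K)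
    ⟨_, restrict_mem_rootLogRatiosOn (const_mem_rootLogRatios 0)⟩
    (fun _ => neg_mem_rootLogRatiosOn) (fun _ hF _ hG => sup_mem_closure_rootLogRatiosOn hF hG)
    separatesPointsStrongly_closure_rootLogRatiosOn
  let gK : C(K, ℝ) := ⟨fun z => g z, hg.domRestrict⟩
  have hgK : gK ∈ closure (rootLogRatiosOn K) := hdense ▸ Set.mem_univ gK
  obtain ⟨F, ⟨f, hf, hFf⟩, hgF⟩ := Metric.mem_closure_iff.1 hgK δ hδ
  refine ⟨f, hf, fun y hy => ?_⟩
  have hy := ContinuousMap.dist_apply_le_dist (f := gK) (g := F) ⟨y, hy⟩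
  rw [Real.dist_eq, hFf] at hy
  exact hy.trans hgF.le

theorem rpow_eval_div_eval_eq_exp {f : (σ → ℝ) → ℝ} {p : ℕ} {P Q : MvPolynomial σ ℝ}
    (hp : 0 < p) (hP : P.IsSubtractionFree) (hQ : Q.IsSubtractionFree)
    (hpf : p • f = logEvalExp P - logEvalExp Q) (y : σ → ℝ) :
    (eval (fun i => exp (y i)) P / eval (fun i => exp (y i)) Q) ^ (1 / (p : ℝ)) = exp (f y) := by
  have hy := congrFun hpf y
  rw [Pi.smul_apply, nsmul_eq_mul, Pi.sub_apply] at hy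
  rw [← hP.exp_logEvalExp, ← hQ.exp_logEvalExp, ← exp_sub, ← hy, ← exp_mul]
  field_simp

end SubtractionFree

theorem isCompact_image_log {σ : Type*} {R : Set (σ → ℝ)} (hcomp : IsCompact R)
    (hpos : ∀ x ∈ R, ∀ i, 0 < x i) : IsCompact ((fun x => fun i => log (x i)) '' R) :=
  hcomp.image_of_continuousOn <| continuousOn_pi.2 fun i =>
    (continuous_apply i).continuousOn.log fun x hx => (hpos x hx i).ne'

theorem subtraction_free_universal_approx_general
    (n : ℕ) (R : Set (Fin n → ℝ)) (hpos : ∀ x ∈ R, ∀ i, 0 < x i)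
    (hcomp : IsCompact R)
    (ℓ : (Fin n → ℝ) → ℝ) (hℓpos : ∀ x ∈ R, 0 < ℓ x) (hcont : ContinuousOn ℓ R)
    (ε : ℝ) (hε : 0 < ε) :
    ∃ (p q : ℕ), 0 < p ∧ 0 < q ∧
      ∃ (KP KQ : ℕ), 0 < KP ∧ 0 < KQ ∧
        ∃ (cP : Fin KP → ℝ) (aP : Fin KP → Fin n → ℕ)
          (cQ : Fin KQ → ℝ) (aQ : Fin KQ → Fin n → ℕ),
          (∀ k, 0 < cP k) ∧ (∀ k, 0 < cQ k) ∧
          ∀ x ∈ R,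
            |(ℓ x
              - ((∑ k, cP k * ∏ i, (x i ^ (1 / (q : ℝ))) ^ (aP k i))
                  / (∑ k, cQ k * ∏ i, (x i ^ (1 / (q : ℝ))) ^ (aQ k i))) ^ (1 / (p : ℝ)))
              / min (ℓ x)
                  (((∑ k, cP k * ∏ i, (x i ^ (1 / (q : ℝ))) ^ (aP k i))
                    / (∑ k, cQ k * ∏ i, (x i ^ (1 / (q : ℝ))) ^ (aQ k i))) ^ (1 / (p : ℝ)))|
              ≤ ε := by
  have hexp_log : ∀ x ∈ R, (fun i => exp (log (x i))) = x := fun x hx =>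
    funext fun i => exp_log (hpos x hx i)
  have hmaps : Set.MapsTo (fun y i => exp (y i)) ((fun x => fun i => log (x i)) '' R) R := by
    rintro _ ⟨x, hx, rfl⟩
    simpa only [hexp_log x hx] using hx
  have hg : ContinuousOn (fun y => log (ℓ fun i => exp (y i)))
      ((fun x => fun i => log (x i)) '' R) :=
    (hcont.comp (continuous_pi fun i => (continuous_apply i).rexp).continuousOn hmaps).log
      fun y hy => (hℓpos _ (hmaps hy)).ne'
  obtain ⟨f, ⟨p, hp, P, Q, hP, hQ, hpf⟩, hfg⟩ :=
    SubtractionFree.exists_mem_rootLogRatios_abs_sub_le (isCompact_image_log hcomp hpos) hg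
      (log_pos (by linarith : 1 < 1 + ε))
  obtain ⟨KP, hKP, cP, aP, hcP, hPsum⟩ := hP.exists_fin_sum_eq
  obtain ⟨KQ, hKQ, cQ, aQ, hcQ, hQsum⟩ := hQ.exists_fin_sum_eq
  refine ⟨p, 1, hp, one_pos, KP, KQ, hKP, hKQ, cP, aP, cQ, aQ, hcP, hcQ, fun x hx => ?_⟩
  have hroot := SubtractionFree.rpow_eval_div_eval_eq_exp hp hP hQ hpf fun i => log (x i)
  have hfx := hfg _ ⟨x, hx, rfl⟩
  simp only [hexp_log x hx, hPsum, hQsum] at hroot hfx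
  simp only [Nat.cast_one, div_one, rpow_one, hroot]
  exact abs_sub_div_min_le_of_abs_log_sub_log_le (hℓpos x hx) (exp_pos _) (by linarith)
    (by rwa [log_exp])

/-- **Universal approximation by subtraction-free expressions.**
Let `R ⊂ ℝ_{>0}ⁿ` be a compact log-convex set and `ℓ : R → ℝ_{>0}` a continuous positive
function.  Then for every `ε > 0` there exist positive integers `p, q` and two polynomials
`P, Q` in `n` variables with positive real coefficients and nonnegative integer exponents
such that `f(x) = (P(x₁^{1/q},…,xₙ^{1/q}) / Q(x₁^{1/q},…,xₙ^{1/q}))^{1/p}` satisfies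
`|(ℓ(x) − f(x)) / min(ℓ(x), f(x))| ≤ ε` for all `x ∈ R`. -/
theorem subtraction_free_universal_approx
    (n : ℕ) (R : Set (Fin n → ℝ)) (hpos : ∀ x ∈ R, ∀ i, 0 < x i)
    (hcomp : IsCompact R)
    (hlogconv : Convex ℝ ((fun x => fun i => Real.log (x i)) '' R))
    (ℓ : (Fin n → ℝ) → ℝ) (hℓpos : ∀ x ∈ R, 0 < ℓ x) (hcont : ContinuousOn ℓ R)
    (ε : ℝ) (hε : 0 < ε) :
    ∃ (p q : ℕ), 0 < p ∧ 0 < q ∧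
      ∃ (KP KQ : ℕ), 0 < KP ∧ 0 < KQ ∧
        ∃ (cP : Fin KP → ℝ) (aP : Fin KP → Fin n → ℕ)
          (cQ : Fin KQ → ℝ) (aQ : Fin KQ → Fin n → ℕ),
          (∀ k, 0 < cP k) ∧ (∀ k, 0 < cQ k) ∧
          ∀ x ∈ R,
            |(ℓ x
              - ((∑ k, cP k * ∏ i, (x i ^ (1 / (q : ℝ))) ^ (aP k i))
                  / (∑ k, cQ k * ∏ i, (x i ^ (1 / (q : ℝ))) ^ (aQ k i))) ^ (1 / (p : ℝ)))
              / min (ℓ x)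
                  (((∑ k, cP k * ∏ i, (x i ^ (1 / (q : ℝ))) ^ (aP k i))
                    / (∑ k, cQ k * ∏ i, (x i ^ (1 / (q : ℝ))) ^ (aQ k i))) ^ (1 / (p : ℝ)))|
              ≤ ε :=
  subtraction_free_universal_approx_general n R hpos hcomp ℓ hℓpos hcont ε hε
end

section
/- Let T > 0, K ∈ ℕ, α^{(1)},…,α^{(K)} ∈ ℝⁿ and β_1,…,β_K ∈ ℝ, and suppose the vectors α^{(1)},…,α^{(K)} constitute an affine generating family of ℝⁿ, i.e., their affine hull is all of ℝⁿ. Then the function f_T : ℝⁿ → ℝ defined by f_T(x) = T·log(Σ_{k=1}^K exp(⟨α^{(k)}, x⟩/T + β_k/T)) is strictly convex on ℝⁿ. -/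
/-! Let `u, v` be the exponent vectors at `x ≠ y`. Weighted AM–GM applied termwise to the
normalised weights `exp u / ∑ exp u` and `exp v / ∑ exp v` gives the Hölder bound
`∑ exp (a u + b v) ≤ (∑ exp u) ^ a * (∑ exp v) ^ b`, strict unless the two weight vectors
coincide, i.e. unless `u - v` is constant. But `u - v = ⟨α k, x - y⟩ / T`, and a linear functional
that is constant on an affinely spanning family vanishes, so this would force `x = y`. -/

open Finset Matrix Real

theorem LinearMap.eq_zero_of_affineSpan_eq_top_of_forall_eq
    {k V W ι : Type*} [Ring k] [AddCommGroup V] [Module k V] [AddCommGroup W] [Module k W]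
    {p : ι → V} (hp : affineSpan k (Set.range p) = ⊤) (f : V →ₗ[k] W) (c : W)
    (hf : ∀ i, f (p i) = c) : f = 0 := by
  have hspan : vectorSpan k (Set.range p) ≤ LinearMap.ker f := by
    rw [vectorSpan_def, Submodule.span_le]
    rintro _ ⟨_, ⟨i, rfl⟩, _, ⟨j, rfl⟩, rfl⟩
    simp [hf]
  rwa [AffineSubspace.vectorSpan_eq_top_of_affineSpan_eq_top k V V hp, top_le_iff,
    LinearMap.ker_eq_top] at hspan

theorem eq_zero_of_affineSpan_eq_top_of_dotProduct_eq
    {ι m : Type*} [Fintype m] {α : ι → m → ℝ} (hα : affineSpan ℝ (Set.range α) = ⊤)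
    {d : m → ℝ} (c : ℝ) (hd : ∀ i, α i ⬝ᵥ d = c) : d = 0 := by
  have hzero := (dotProductBilin ℝ ℝ d).eq_zero_of_affineSpan_eq_top_of_forall_eq hα c
    fun i => by rw [dotProductBilin_apply_apply, dotProduct_comm, hd]
  exact dotProduct_self_eq_zero.mp (LinearMap.congr_fun hzero d)

theorem Real.sum_rpow_mul_rpow_lt_one {ι : Type*} [Fintype ι] {p q : ι → ℝ}
    (hp : ∀ i, 0 ≤ p i) (hq : ∀ i, 0 ≤ q i) (hp1 : ∑ i, p i = 1) (hq1 : ∑ i, q i = 1)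
    (hpq : p ≠ q) {a b : ℝ} (ha : 0 < a) (hb : 0 < b) (hab : a + b = 1) :
    ∑ i, p i ^ a * q i ^ b < 1 := by
  obtain ⟨i, hi⟩ := Function.ne_iff.mp hpq
  calc ∑ i, p i ^ a * q i ^ b
      < ∑ i, (a * p i + b * q i) :=
        sum_lt_sum (fun j _ => geom_mean_le_arith_mean2_weighted ha.le hb.le (hp j) (hq j) hab)
          ⟨i, mem_univ i,
            (geom_mean_lt_arith_mean2_weighted_iff_of_pos ha hb (hp i) (hq i) hab).2 hi⟩
    _ = 1 := by rw [sum_add_distrib, ← mul_sum, ← mul_sum, hp1, hq1, mul_one, mul_one, hab]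

theorem Real.log_sum_exp_lt_of_sub_ne_const {ι : Type*} [Fintype ι] {u v : ι → ℝ}
    (huv : ∀ c : ℝ, u - v ≠ Function.const ι c) {a b : ℝ} (ha : 0 < a) (hb : 0 < b)
    (hab : a + b = 1) :
    log (∑ i, exp (a * u i + b * v i)) <
      a * log (∑ i, exp (u i)) + b * log (∑ i, exp (v i)) := by
  obtain ⟨i₀⟩ : Nonempty ι := by
    by_contra h
    exact huv 0 (funext fun i => (h ⟨i⟩).elim)
  set A := ∑ i, exp (u i)
  set B := ∑ i, exp (v i)
  have hA : 0 < A := sum_pos (fun i _ => exp_pos _) ⟨i₀, mem_univ _⟩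
  have hB : 0 < B := sum_pos (fun i _ => exp_pos _) ⟨i₀, mem_univ _⟩
  have hsum : ∀ (w : ι → ℝ) (c : ℝ), ∑ i, exp (w i - c) = (∑ i, exp (w i)) / exp c := by
    intro w c
    simp only [exp_sub, sum_div]
  have hpq : (fun i => exp (u i - log A)) ≠ fun i => exp (v i - log B) := by
    intro h
    refine huv (log A - log B) (funext fun i => ?_)
    have := exp_injective (congrFun h i)
    simp only [Pi.sub_apply, Function.const_apply]
    linarith
  have key := sum_rpow_mul_rpow_lt_one (fun i => (exp_pos _).le) (fun i => (exp_pos _).le)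
    (by rw [hsum, exp_log hA, div_self hA.ne']) (by rw [hsum, exp_log hB, div_self hB.ne'])
    hpq ha hb hab
  simp only [← exp_mul, ← exp_add] at key
  rw [log_lt_iff_lt_exp (sum_pos (fun i _ => exp_pos _) ⟨i₀, mem_univ _⟩)]
  have hexp : ∀ i, (u i - log A) * a + (v i - log B) * b =
      (a * u i + b * v i) - (a * log A + b * log B) := fun i => by ring
  simp only [hexp, hsum] at key
  exact (div_lt_one (exp_pos _)).mp key

theorem lse_strictConvex_general
    (n K : ℕ) (T : ℝ) (hT : 0 < T)
    (α : Fin K → Fin n → ℝ) (β : Fin K → ℝ)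
    (hgen : affineSpan ℝ (Set.range α) = ⊤) :
    StrictConvexOn ℝ Set.univ
      (fun x : Fin n → ℝ =>
        T * Real.log (∑ k, Real.exp ((∑ i, α k i * x i) / T + β k / T))) := by
  refine ⟨convex_univ, fun x _ y _ hxy a b ha hb hab => ?_⟩
  set u : Fin K → ℝ := fun k => (α k ⬝ᵥ x) / T + β k / T
  set v : Fin K → ℝ := fun k => (α k ⬝ᵥ y) / T + β k / T
  have hcomb : ∀ k, (∑ i, α k i * (a • x + b • y) i) / T + β k / T = a * u k + b * v k := by
    intro k
    change (α k ⬝ᵥ (a • x + b • y)) / T + _ = _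
    rw [dotProduct_add, dotProduct_smul, dotProduct_smul, ← one_mul (β k), ← hab]
    simp only [u, v, smul_eq_mul]
    ring
  have huv : ∀ c : ℝ, u - v ≠ Function.const (Fin K) c := by
    intro c h
    refine hxy (sub_eq_zero.mp (eq_zero_of_affineSpan_eq_top_of_dotProduct_eq hgen (T * c)
      fun k => ?_))
    have hk := congrFun h k
    simp only [u, v, Pi.sub_apply, Function.const_apply] at hk
    rw [dotProduct_sub, ← hk]
    field_simp
    ring
  simp only [hcomb, smul_eq_mul]
  calc T * log (∑ k, exp (a * u k + b * v k))
      < T * (a * log (∑ k, exp (u k)) + b * log (∑ k, exp (v k))) :=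
        mul_lt_mul_of_pos_left (log_sum_exp_lt_of_sub_ne_const huv ha hb hab) hT
    _ = a * (T * log (∑ k, exp (u k))) + b * (T * log (∑ k, exp (v k))) := by ring

/-- **Strict convexity of LSE_T functions.**
Let `T > 0`, `K ∈ ℕ`, `α⁽¹⁾,…,α⁽ᴷ⁾ ∈ ℝⁿ`, `β₁,…,βₖ ∈ ℝ`, and suppose the vectors
`α⁽¹⁾,…,α⁽ᴷ⁾` constitute an affine generating family of `ℝⁿ` (their affine hull is all of
`ℝⁿ`).  Then `f_T(x) = T·log (∑ₖ exp(⟨α⁽ᵏ⁾, x⟩/T + βₖ/T))` is strictly convex on `ℝⁿ`. -/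
theorem lse_strictConvex
    (n K : ℕ) (hK : 0 < K) (T : ℝ) (hT : 0 < T)
    (α : Fin K → Fin n → ℝ) (β : Fin K → ℝ)
    (hgen : affineSpan ℝ (Set.range α) = ⊤) :
    StrictConvexOn ℝ Set.univ
      (fun x : Fin n → ℝ =>
        T * Real.log (∑ k, Real.exp ((∑ i, α k i * x i) / T + β k / T))) :=
  lse_strictConvex_general n K T hT α β hgen
end
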